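/- arXiv:2012.06507 — 8 statements merged into one kernel-verified Lean document; each statement's English description precedes it below -/
import Mathlib

section
/- Let k be a positive integer and let P = k×k be the 2-dimensional grid poset on pairs (i,j) with 0 ≤ i,j ≤ k-1 ordered componentwise. Define I₁ to be the set of pairs ((i+1,0),(i,k-1)) for 0 ≤ i ≤ k-2, and I₂ to be the set of pairs ((0,j+1),(k-1,j)) for 0 ≤ j ≤ k-2. Then no linear extension of P can simultaneously reverse a pair from I₁ and a pair from I₂; i.e., if L is a linear extension of P, (x₁,y₁) ∈ I₁ and (x₂,y₂) ∈ I₂, then it is not the case that both y₁ < x₁ in L and y₂ < x₂ in L. -/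
/-! A linear extension reversing `(x₁, y₁)` and `(x₂, y₂)` with `x₁ ≤ y₂` and `x₂ ≤ y₁` would give
`x₁ ≤ y₂ <_L x₂ ≤ y₁ <_L x₁`, a cycle. In the grid, `(i+1, 0) ≤ (k-1, j)` and `(0, j+1) ≤ (i, k-1)`
always hold, so the pairs of `I₁` and `I₂` form such alternating cycles. -/

theorem eq_of_reverses_alternating_cycle {α : Type*} [LE α] {L : α → α → Prop}
    [IsTrans α L] [Std.Antisymm L] (hext : ∀ x y : α, x ≤ y → L x y) {x₁ y₁ x₂ y₂ : α}
    (hx₁y₂ : x₁ ≤ y₂) (hx₂y₁ : x₂ ≤ y₁) (hrev₁ : L y₁ x₁) (hrev₂ : L y₂ x₂) : y₁ = x₁ :=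
  antisymm hrev₁ <|
    trans_of L (trans_of L (hext _ _ hx₁y₂) hrev₂) (hext _ _ hx₂y₁)

/-- In the grid poset `Fin k × Fin k` (componentwise order), no linear
extension `L` can simultaneously reverse a pair from
`I₁ = {((i+1,0),(i,k-1)) : 0 ≤ i ≤ k-2}` and a pair from
`I₂ = {((0,j+1),(k-1,j)) : 0 ≤ j ≤ k-2}`. -/
theorem stmt_0 (k : ℕ) (hk : 0 < k)
    (L : Fin k × Fin k → Fin k × Fin k → Prop)
    (hlin : IsLinearOrder (Fin k × Fin k) L)
    (hext : ∀ x y : Fin k × Fin k, x ≤ y → L x y)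
    (i j : ℕ) (hi : i + 1 ≤ k - 1) (hj : j + 1 ≤ k - 1) :
    ¬ (L (⟨i, by omega⟩, ⟨k - 1, by omega⟩) (⟨i + 1, by omega⟩, ⟨0, hk⟩)
        ∧ (⟨i, by omega⟩, (⟨k - 1, by omega⟩ : Fin k))
            ≠ ((⟨i + 1, by omega⟩ : Fin k), ⟨0, hk⟩)
        ∧ L (⟨k - 1, by omega⟩, ⟨j, by omega⟩) (⟨0, hk⟩, ⟨j + 1, by omega⟩)
        ∧ ((⟨k - 1, by omega⟩ : Fin k), (⟨j, by omega⟩ : Fin k))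
            ≠ (⟨0, hk⟩, ⟨j + 1, by omega⟩)) := by
  rintro ⟨hrev₁, hne₁, hrev₂, -⟩
  refine hne₁ (eq_of_reverses_alternating_cycle hext ?_ ?_ hrev₁ hrev₂) <;>
    exact Prod.mk_le_mk.2 ⟨Fin.mk_le_mk.2 (by omega), Fin.mk_le_mk.2 (by omega)⟩
end

section
/- Let k ≥ 2 and let P = k×k be the 2-dimensional grid poset on pairs (i,j) with 0 ≤ i,j ≤ k-1. Then P has exactly one realizer of size two: the pair consisting of the lexicographic order on pairs and the colexicographic order on pairs (reading coordinates right-to-left). That is, if {L₁, L₂} is a set of two linear extensions of P whose intersection is the partial order of P, then {L₁, L₂} = {lex, colex}. -/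
/-!
Call `(x, y)` an inversion of the grid if `x.1 < y.1` and `y.2 < x.2`; these are exactly the
incomparable pairs, up to order. In a realizer `{L₁, L₂}` of size two, an incomparable pair is
ordered one way by `L₁` and the other way by `L₂`, and moving one end of it along a chain of the
poset, while it stays incomparable to the other end, cannot flip its orientation in `L₁`.
Any two inversions can be stretched to a common one in this way, so `L₁` orients all inversions
alike: forwards, and then `L₁` is lex and `L₂` colex, or backwards, with the roles exchanged.
-/

theorem eq_of_imp_of_total {α : Type*} {r s : α → α → Prop} [Std.Antisymm r]
    (hs : ∀ a b, s a b ∨ s b a) (h : ∀ a b, s a b → r a b) : r = s := by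
  funext a b
  refine propext ⟨fun hab => ?_, h a b⟩
  rcases hs a b with hab' | hba
  · exact hab'
  · obtain rfl := antisymm_of r hab (h b a hba)
    exact hba

structure IsRealizerPair {P : Type*} [LE P] (L₁ L₂ : P → P → Prop) : Prop where
  linear₁ : IsLinearOrder P L₁
  linear₂ : IsLinearOrder P L₂
  and_iff_le : ∀ x y, L₁ x y ∧ L₂ x y ↔ x ≤ y

namespace IsRealizerPair

variable {P : Type*} [PartialOrder P] {L₁ L₂ : P → P → Prop} {x y z : P}

theorem symm (h : IsRealizerPair L₁ L₂) : IsRealizerPair L₂ L₁ :=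
  ⟨h.linear₂, h.linear₁, fun x y => and_comm.trans (h.and_iff_le x y)⟩

theorem rel₁_of_le (h : IsRealizerPair L₁ L₂) (hxy : x ≤ y) : L₁ x y :=
  ((h.and_iff_le x y).2 hxy).1

theorem rel₂_of_rel₁ (h : IsRealizerPair L₁ L₂) (hxy : ¬ x ≤ y) (h₁ : L₁ x y) : L₂ y x :=
  have := h.linear₂
  (total_of L₂ y x).resolve_right fun h₂ => hxy ((h.and_iff_le x y).1 ⟨h₁, h₂⟩)

theorem rel₁_iff_rel₂ (h : IsRealizerPair L₁ L₂) (hxy : IncompRel (· ≤ ·) x y) :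
    L₁ x y ↔ L₂ y x :=
  ⟨h.rel₂_of_rel₁ hxy.not_le, h.symm.rel₂_of_rel₁ hxy.not_ge⟩

theorem rel₁_iff_of_le_right (h : IsRealizerPair L₁ L₂) (hxy : IncompRel (· ≤ ·) x y)
    (hxz : IncompRel (· ≤ ·) x z) (hyz : y ≤ z) : L₁ x y ↔ L₁ x z := by
  have := h.linear₁
  have := h.linear₂
  refine ⟨fun hy => trans_of L₁ hy (h.rel₁_of_le hyz), fun hz => ?_⟩
  by_contra hy
  have hzy : L₂ z y :=
    trans_of L₂ (h.rel₂_of_rel₁ hxz.not_le hz)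
      (h.rel₂_of_rel₁ hxy.not_ge ((total_of L₁ x y).resolve_left hy))
  obtain rfl := antisymm_of L₂ (h.symm.rel₁_of_le hyz) hzy
  exact hy hz

theorem rel₁_iff_of_le_left (h : IsRealizerPair L₁ L₂) (hxy : IncompRel (· ≤ ·) x y)
    (hxz : IncompRel (· ≤ ·) x z) (hyz : y ≤ z) : L₁ y x ↔ L₁ z x := by
  rw [h.rel₁_iff_rel₂ hxy.symm, h.rel₁_iff_rel₂ hxz.symm]
  exact h.symm.rel₁_iff_of_le_right hxy hxz hyz

end IsRealizerPair

section Grid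

variable {α β : Type*} [LinearOrder α] [LinearOrder β]

def IsInversion (x y : α × β) : Prop :=
  x.1 < y.1 ∧ y.2 < x.2

theorem IsInversion.incompRel {x y : α × β} (hxy : IsInversion x y) :
    IncompRel (· ≤ ·) x y :=
  ⟨fun hle => hxy.2.not_ge hle.2, fun hle => hxy.1.not_ge hle.1⟩

theorem isInversion_of_lex {p q : α × β} (hpq : p.1 < q.1 ∨ (p.1 = q.1 ∧ p.2 ≤ q.2))
    (hle : ¬ p ≤ q) : IsInversion p q := by
  rcases hpq with h₁ | ⟨h₁, h₂⟩
  · exact ⟨h₁, not_le.1 fun h₂ => hle ⟨h₁.le, h₂⟩⟩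
  · exact absurd ⟨h₁.le, h₂⟩ hle

theorem isInversion_of_colex {p q : α × β} (hpq : p.2 < q.2 ∨ (p.2 = q.2 ∧ p.1 ≤ q.1))
    (hle : ¬ p ≤ q) : IsInversion q p := by
  rcases hpq with h₂ | ⟨h₂, h₁⟩
  · exact ⟨not_le.1 fun h₁ => hle ⟨h₁, h₂.le⟩, h₂⟩
  · exact absurd ⟨h₁, h₂.le⟩ hle

variable {L₁ L₂ : α × β → α × β → Prop}

/-- The stretch passes through the corners `(y.1, b.2)`, below `y` and `b`, and `(x.1, a.2)`,
above `x` and `a`. -/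
theorem IsRealizerPair.rel₁_iff_of_stretch (h : IsRealizerPair L₁ L₂) {x y a b : α × β}
    (hxy : IsInversion x y) (ha₁ : a.1 ≤ x.1) (ha₂ : x.2 ≤ a.2) (hb₁ : y.1 ≤ b.1)
    (hb₂ : b.2 ≤ y.2) : L₁ x y ↔ L₁ a b := by
  have hxc : IsInversion x (y.1, b.2) := ⟨hxy.1, hb₂.trans_lt hxy.2⟩
  have hxb : IsInversion x b := ⟨hxy.1.trans_le hb₁, hxc.2⟩
  have hdb : IsInversion (x.1, a.2) b := ⟨hxb.1, hxb.2.trans_le ha₂⟩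
  have hab : IsInversion a b := ⟨ha₁.trans_lt hxb.1, hdb.2⟩
  calc L₁ x y ↔ L₁ x (y.1, b.2) :=
        (h.rel₁_iff_of_le_right hxc.incompRel hxy.incompRel ⟨le_rfl, hb₂⟩).symm
    _ ↔ L₁ x b := h.rel₁_iff_of_le_right hxc.incompRel hxb.incompRel ⟨hb₁, le_rfl⟩
    _ ↔ L₁ (x.1, a.2) b :=
        h.rel₁_iff_of_le_left hxb.incompRel.symm hdb.incompRel.symm ⟨le_rfl, ha₂⟩
    _ ↔ L₁ a b :=
        (h.rel₁_iff_of_le_left hab.incompRel.symm hdb.incompRel.symm ⟨ha₁, le_rfl⟩).symm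

theorem IsRealizerPair.rel₁_iff_of_isInversion (h : IsRealizerPair L₁ L₂) {x y x' y' : α × β}
    (hxy : IsInversion x y) (hxy' : IsInversion x' y') : L₁ x y ↔ L₁ x' y' :=
  (h.rel₁_iff_of_stretch (a := (x.1 ⊓ x'.1, x.2 ⊔ x'.2)) (b := (y.1 ⊔ y'.1, y.2 ⊓ y'.2)) hxy
      inf_le_left le_sup_left le_sup_left inf_le_left).trans
    (h.rel₁_iff_of_stretch hxy' inf_le_right le_sup_right le_sup_right inf_le_right).symm

theorem IsRealizerPair.eq_lex_and_eq_colex_of_forall_isInversion (h : IsRealizerPair L₁ L₂)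
    (hinv : ∀ x y, IsInversion x y → L₁ x y) :
    (L₁ = fun p q => p.1 < q.1 ∨ (p.1 = q.1 ∧ p.2 ≤ q.2)) ∧
      (L₂ = fun p q => p.2 < q.2 ∨ (p.2 = q.2 ∧ p.1 ≤ q.1)) := by
  have := h.linear₁
  have := h.linear₂
  constructor
  · refine eq_of_imp_of_total (fun p q => ?_) fun p q hpq => ?_
    · simpa only [Prod.Lex.toLex_le_toLex] using le_total (toLex p) (toLex q)
    by_cases hle : p ≤ q
    · exact h.rel₁_of_le hle
    · exact hinv p q (isInversion_of_lex hpq hle)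
  · refine eq_of_imp_of_total (fun p q => ?_) fun p q hpq => ?_
    · simpa only [Prod.Lex.toLex_le_toLex] using le_total (toLex (p.2, p.1)) (toLex (q.2, q.1))
    by_cases hle : p ≤ q
    · exact h.symm.rel₁_of_le hle
    · have hqp := isInversion_of_colex hpq hle
      exact h.rel₂_of_rel₁ hqp.incompRel.not_le (hinv q p hqp)

end Grid

theorem stmt_1_general (k : ℕ)
    (L₁ L₂ : Fin k × Fin k → Fin k × Fin k → Prop)
    (h₁ : IsLinearOrder (Fin k × Fin k) L₁)
    (h₂ : IsLinearOrder (Fin k × Fin k) L₂)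
    (hreal : ∀ x y : Fin k × Fin k, (L₁ x y ∧ L₂ x y) ↔ x ≤ y) :
    (L₁ = fun p q => p.1 < q.1 ∨ (p.1 = q.1 ∧ p.2 ≤ q.2)) ∧
      (L₂ = fun p q => p.2 < q.2 ∨ (p.2 = q.2 ∧ p.1 ≤ q.1)) ∨
    (L₁ = fun p q => p.2 < q.2 ∨ (p.2 = q.2 ∧ p.1 ≤ q.1)) ∧
      (L₂ = fun p q => p.1 < q.1 ∨ (p.1 = q.1 ∧ p.2 ≤ q.2)) := by
  have h : IsRealizerPair L₁ L₂ := ⟨h₁, h₂, hreal⟩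
  by_cases hinv : ∀ x y, IsInversion x y → L₁ x y
  · exact Or.inl (h.eq_lex_and_eq_colex_of_forall_isInversion hinv)
  · push Not at hinv
    obtain ⟨x, y, hxy, hL⟩ := hinv
    have := h.linear₁
    have hinv₂ : ∀ x' y', IsInversion x' y' → L₂ x' y' := fun x' y' hxy' =>
      h.rel₂_of_rel₁ hxy'.incompRel.not_ge
        ((total_of L₁ x' y').resolve_left (mt (h.rel₁_iff_of_isInversion hxy' hxy).1 hL))
    exact Or.inr (h.symm.eq_lex_and_eq_colex_of_forall_isInversion hinv₂).symm

/-- For `k ≥ 2`, the grid `Fin k × Fin k` has exactly one two-element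
realizer, namely `{lex, colex}`. -/
theorem stmt_1 (k : ℕ) (hk : 2 ≤ k)
    (L₁ L₂ : Fin k × Fin k → Fin k × Fin k → Prop)
    (h₁ : IsLinearOrder (Fin k × Fin k) L₁)
    (h₂ : IsLinearOrder (Fin k × Fin k) L₂)
    (hext₁ : ∀ x y : Fin k × Fin k, x ≤ y → L₁ x y)
    (hext₂ : ∀ x y : Fin k × Fin k, x ≤ y → L₂ x y)
    (hreal : ∀ x y : Fin k × Fin k, (L₁ x y ∧ L₂ x y) ↔ x ≤ y) :
    (L₁ = fun p q => p.1 < q.1 ∨ (p.1 = q.1 ∧ p.2 ≤ q.2)) ∧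
      (L₂ = fun p q => p.2 < q.2 ∨ (p.2 = q.2 ∧ p.1 ≤ q.1)) ∨
    (L₁ = fun p q => p.2 < q.2 ∨ (p.2 = q.2 ∧ p.1 ≤ q.1)) ∧
      (L₂ = fun p q => p.1 < q.1 ∨ (p.1 = q.1 ∧ p.2 ≤ q.2)) :=
  stmt_1_general k L₁ L₂ h₁ h₂ hreal
end

section
/- For every positive integer t, the class of t-dimensional grids has the Ramsey property for comparabilities: for all positive integers s and r, there exists n such that for every r-coloring of the set of comparable pairs {(a,b) : a < b in n^t}, there exists a subposet P' of n^t isomorphic to the grid s^t such that all comparable pairs of P' receive the same color. -/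
/-!
Colour a `2t`-subset `a₀ < a₁ < ⋯ < a_{2t-1}` of `[n]` by the colour of the pair of grid points
`((a₀, a₂, …), (a₁, a₃, …))`, and take a large monochromatic set `b₀ < b₁ < ⋯` from the finite
Ramsey theorem. Send `x ∈ s^t` to the point `i ↦ b_{p(x, i)}`, where the positions `p(x, i)` of the
`i`-th coordinate all lie in an `i`-th block of indices and `x < y` forces `p(x, i) < p(y, i)` for
every `i`. For `x < y` the interleaved positions `p(x, 0) < p(y, 0) < p(x, 1) < p(y, 1) < ⋯` then
pick out a `2t`-subset of the monochromatic set whose colour is that of the pair `(f x, f y)`.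
-/

open Finset

/-- The arrow relation `n → (M)^k_r`, with `n` uniform over all linear orders. -/
def RamseyArrow (n M k r : ℕ) : Prop :=
  ∀ {α : Type} [LinearOrder α] (S : Finset α), n ≤ #S → ∀ c : Finset α → Fin r,
    ∃ B ⊆ S, M ≤ #B ∧ ∃ k₀, ∀ A ⊆ B, #A = k → c A = k₀

lemma ramseyArrow_zero (M r : ℕ) : RamseyArrow M M 0 r :=
  fun S hS c => ⟨S, Subset.rfl, hS, c ∅, fun A _ hA => by rw [card_eq_zero.1 hA]⟩

/-- Peel off the minimum `v` of `S` and pass to a subset of `S \ {v}` on which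
`A ↦ c (insert v A)` is constant; hence the iterated bound. -/
lemma exists_endHomogeneous {k r : ℕ} {F : ℕ → ℕ} (hF : ∀ M, RamseyArrow (F M) M k r)
    {α : Type} [LinearOrder α] (c : Finset α → Fin r) (j : ℕ) (S : Finset α)
    (hS : (fun m => F m + 1)^[j] 0 ≤ #S) :
    ∃ T ⊆ S, #T = j ∧ ∃ g : α → Fin r,
      ∀ a ∈ T, ∀ A ⊆ T.filter (a < ·), #A = k → c (insert a A) = g a := by
  induction j generalizing S with
  | zero => exact ⟨∅, empty_subset S, rfl, fun _ => c ∅, by simp⟩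
  | succ j ih =>
    rw [Function.iterate_succ_apply'] at hS
    have hSne : S.Nonempty := card_pos.1 (by omega)
    set v := S.min' hSne
    have hvS : v ∈ S := S.min'_mem hSne
    obtain ⟨B, hBS, hB, k₀, hk₀⟩ :=
      hF ((fun m => F m + 1)^[j] 0) (S.erase v) (by rw [card_erase_of_mem hvS]; omega)
        fun A => c (insert v A)
    obtain ⟨T, hTB, hT, g, hg⟩ := ih B hB
    have hvT : v ∉ T := fun h => notMem_erase v S (hBS (hTB h))
    have hvlt : ∀ a ∈ T, v < a := fun a ha =>
      lt_of_le_of_ne (S.min'_le a (mem_of_mem_erase (hBS (hTB ha))))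
        (ne_of_mem_of_not_mem ha hvT).symm
    refine ⟨insert v T, insert_subset hvS ((hTB.trans hBS).trans (erase_subset v S)),
      by rw [card_insert_of_notMem hvT, hT], Function.update g v k₀, ?_⟩
    intro a ha A hA hAk
    rcases mem_insert.1 ha with rfl | haT
    · rw [Function.update_self]
      refine hk₀ A (fun x hx => hTB ?_) hAk
      obtain ⟨hxT, hax⟩ := mem_filter.1 (hA hx)
      exact (mem_insert.1 hxT).resolve_left hax.ne'
    · rw [Function.update_of_ne (hvlt a haT).ne']
      refine hg a haT A (fun x hx => ?_) hAk
      obtain ⟨hxT, hax⟩ := mem_filter.1 (hA hx)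
      refine mem_filter.2 ⟨(mem_insert.1 hxT).resolve_left fun h => ?_, hax⟩
      exact lt_asymm (hvlt a haT) (h ▸ hax)

theorem exists_ramseyArrow (M k r : ℕ) : ∃ n, RamseyArrow n M k r := by
  induction k generalizing M with
  | zero => exact ⟨M, ramseyArrow_zero M r⟩
  | succ k ih =>
    choose F hF using ih
    refine ⟨(fun m => F m + 1)^[r * M + 1] 0, fun S hS c => ?_⟩
    obtain ⟨T, hTS, hT, g, hg⟩ := exists_endHomogeneous hF c _ S hS
    have hrM : #(univ : Finset (Fin r)) * (M - 1) < #T := by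
      rw [card_univ, Fintype.card_fin, hT]
      exact Nat.lt_succ_of_le (Nat.mul_le_mul_left r (Nat.sub_le M 1))
    obtain ⟨k₀, -, hk₀⟩ :=
      exists_lt_card_fiber_of_mul_lt_card_of_maps_to (fun a _ => mem_univ (g a)) hrM
    refine ⟨T.filter (g · = k₀), (filter_subset _ _).trans hTS, by omega, k₀,
      fun A hA hAk => ?_⟩
    have hAne : A.Nonempty := card_pos.1 (by omega)
    set a := A.min' hAne
    have haA : a ∈ A := A.min'_mem hAne
    obtain ⟨haT, hga⟩ := mem_filter.1 (hA haA)
    rw [← insert_erase haA, hg a haT _ _ (by rw [card_erase_of_mem haA, hAk]; rfl), hga]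
    intro x hx
    exact mem_filter.2 ⟨(mem_filter.1 (hA (mem_of_mem_erase hx))).1,
      lt_of_le_of_ne (A.min'_le x (mem_of_mem_erase hx)) (ne_of_mem_erase hx).symm⟩

theorem exists_monochromatic_orderEmbedding (M k r : ℕ) :
    ∃ n, ∀ c : (Fin k ↪o Fin n) → Fin r,
      ∃ B : Fin M ↪o Fin n, ∃ k₀, ∀ e : Fin k ↪o Fin M, c (e.trans B) = k₀ := by
  obtain ⟨n, hn⟩ := exists_ramseyArrow M k r
  refine ⟨max n k, fun c => ?_⟩
  let cS : Finset (Fin (max n k)) → Fin r := fun A =>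
    if h : #A = k then c (A.orderEmbOfFin h) else c (Fin.castLEOrderEmb (le_max_right n k))
  obtain ⟨B, -, hB, k₀, hk₀⟩ := hn univ (by simp) cS
  refine ⟨(Fin.castLEOrderEmb hB).trans (B.orderEmbOfFin rfl), k₀, fun e => ?_⟩
  set E := e.trans ((Fin.castLEOrderEmb hB).trans (B.orderEmbOfFin rfl))
  have hEB : ∀ j, E j ∈ B := fun j => B.orderEmbOfFin_mem rfl _
  have hA : #(univ.map E.toEmbedding) = k := by simp
  have := hk₀ _ (fun x hx => by obtain ⟨j, -, rfl⟩ := mem_map.1 hx; exact hEB j) hA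
  simp only [cS, dif_pos hA] at this
  rwa [← orderEmbOfFin_unique' hA (fun j => mem_map_of_mem _ (mem_univ j))] at this

section Interleave

variable {α : Type*} {t : ℕ}

def interleave (u v : Fin t → α) (j : Fin (2 * t)) : α :=
  if (j : ℕ) % 2 = 0 then u ⟨j / 2, by omega⟩ else v ⟨j / 2, by omega⟩

lemma interleave_two_mul (u v : Fin t → α) (i : Fin t) :
    interleave u v ⟨2 * i, by omega⟩ = u i := by
  simp [interleave]

lemma interleave_two_mul_add_one (u v : Fin t → α) (i : Fin t) :
    interleave u v ⟨2 * i + 1, by omega⟩ = v i := by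
  simp [interleave, Nat.add_mod, show (2 * (i : ℕ) + 1) / 2 = i by omega]

lemma strictMono_interleave [Preorder α] {u v : Fin t → α} (huv : ∀ i, u i < v i)
    (hvu : ∀ i i', i < i' → v i < u i') : StrictMono (interleave u v) := by
  intro j j' h
  have h' : (j : ℕ) < j' := h
  simp only [interleave]
  rcases (Nat.div_le_div_right (c := 2) h'.le).lt_or_eq with hlt | heq
  · have := hvu ⟨j / 2, by omega⟩ ⟨j' / 2, by omega⟩ hlt
    have := huv ⟨j / 2, by omega⟩
    have := huv ⟨j' / 2, by omega⟩
    split_ifs <;> order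
  · rw [if_pos (by omega), if_neg (by omega)]
    exact huv _ |>.trans_eq (congrArg v (Fin.ext heq))

end Interleave

section Spread

variable {s t : ℕ}

/-- The summand `∑ j, x j` makes every coordinate grow strictly along `x < y`, while the weight
`t * s > ∑ j, x j` keeps `x i` readable from `spread x i`. -/
def spread (x : Fin t → Fin s) (i : Fin t) : ℕ := x i * (t * s) + ∑ j, (x j : ℕ)

lemma sum_val_lt (x : Fin t → Fin s) (i : Fin t) : ∑ j, (x j : ℕ) < t * s := by
  calc ∑ j, (x j : ℕ) < ∑ _j : Fin t, s :=
        sum_lt_sum_of_nonempty ⟨i, mem_univ i⟩ fun j _ => (x j).isLt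
    _ = t * s := by simp

lemma spread_lt (x : Fin t → Fin s) (i : Fin t) : spread x i < s * (t * s) := by
  have := Nat.mul_le_mul_right (t * s) (x i).isLt
  have := sum_val_lt x i
  rw [spread, Nat.succ_mul] at *
  omega

lemma spread_div (x : Fin t → Fin s) (i : Fin t) : spread x i / (t * s) = x i := by
  have := sum_val_lt x i
  rw [spread, Nat.mul_comm, Nat.mul_add_div (Nat.zero_lt_of_lt this), Nat.div_eq_of_lt this,
    add_zero]

lemma spread_mono {x y : Fin t → Fin s} (h : x ≤ y) (i : Fin t) : spread x i ≤ spread y i :=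
  Nat.add_le_add (Nat.mul_le_mul_right _ (h i)) (sum_le_sum fun j _ => h j)

lemma spread_strictMono {x y : Fin t → Fin s} (h : x < y) (i : Fin t) :
    spread x i < spread y i := by
  obtain ⟨hle, j, hj⟩ := Pi.lt_def.1 h
  exact Nat.add_lt_add_of_le_of_lt (Nat.mul_le_mul_right _ (hle i))
    (sum_lt_sum (fun j _ => hle j) ⟨j, mem_univ j, hj⟩)

def blockSpread (x : Fin t → Fin s) (i : Fin t) : Fin (t * (s * (t * s))) :=
  ⟨i * (s * (t * s)) + spread x i, by
    have := spread_lt x i; have := Nat.mul_le_mul_right (s * (t * s)) i.isLt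
    rw [Nat.succ_mul] at *; omega⟩

lemma blockSpread_le_blockSpread_iff {x y : Fin t → Fin s} :
    blockSpread x ≤ blockSpread y ↔ x ≤ y := by
  refine ⟨fun h i => ?_, fun h i => ?_⟩
  · show (x i : ℕ) ≤ y i
    rw [← spread_div x i, ← spread_div y i]
    exact Nat.div_le_div_right (Nat.le_of_add_le_add_left (h i))
  · exact Nat.add_le_add_left (spread_mono h i) _

lemma blockSpread_lt_of_lt {x y : Fin t → Fin s} (h : x < y) (i : Fin t) :
    blockSpread x i < blockSpread y i :=
  Nat.add_lt_add_left (spread_strictMono h i) _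

lemma blockSpread_lt_of_index_lt (x y : Fin t → Fin s) {i i' : Fin t} (h : i < i') :
    blockSpread x i < blockSpread y i' := by
  have := spread_lt x i
  have := Nat.mul_le_mul_right (s * (t * s)) (show (i : ℕ) + 1 ≤ i' from h)
  show i * _ + spread x i < i' * _ + spread y i'
  rw [Nat.succ_mul] at *; omega

end Spread

theorem stmt_7_general (t : ℕ) (s r : ℕ) :
    ∃ n : ℕ, ∀ c : (Fin t → Fin n) → (Fin t → Fin n) → Fin r,
      ∃ f : (Fin t → Fin s) → (Fin t → Fin n),
        (∀ x y : Fin t → Fin s, x ≤ y ↔ f x ≤ f y) ∧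
        ∃ k : Fin r, ∀ x y : Fin t → Fin s, x < y → c (f x) (f y) = k := by
  obtain ⟨n, hn⟩ := exists_monochromatic_orderEmbedding (t * (s * (t * s))) (2 * t) r
  refine ⟨n, fun c => ?_⟩
  obtain ⟨B, k, hk⟩ :=
    hn fun e => c (fun i => e ⟨2 * i, by omega⟩) (fun i => e ⟨2 * i + 1, by omega⟩)
  refine ⟨fun x i => B (blockSpread x i), fun x y => ?_, k, fun x y hxy => ?_⟩
  · rw [← blockSpread_le_blockSpread_iff]
    exact forall_congr' fun i => B.le_iff_le.symm
  · have := hk (.ofStrictMono _ (strictMono_interleave (blockSpread_lt_of_lt hxy)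
      fun _ _ => blockSpread_lt_of_index_lt y x))
    simpa only [RelEmbedding.coe_trans, Function.comp_apply, OrderEmbedding.coe_ofStrictMono,
      interleave_two_mul, interleave_two_mul_add_one] using this

/-- The class of `t`-dimensional grids has the Ramsey property for
comparabilities: for all `s, r > 0` there is `n` such that any `r`-coloring of the
comparable pairs of the grid `(Fin t → Fin n)` (componentwise order) yields a
subposet isomorphic to the grid `s^t` all of whose comparable pairs get one color. -/
theorem stmt_7 (t : ℕ) (ht : 0 < t) (s r : ℕ) (hs : 0 < s) (hr : 0 < r) :
    ∃ n : ℕ, ∀ c : (Fin t → Fin n) → (Fin t → Fin n) → Fin r,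
      ∃ f : (Fin t → Fin s) → (Fin t → Fin n),
        (∀ x y : Fin t → Fin s, x ≤ y ↔ f x ≤ f y) ∧
        ∃ k : Fin r, ∀ x y : Fin t → Fin s, x < y → c (f x) (f y) = k :=
  stmt_7_general t s r
end

section
/- The class of all finite posets has the Ramsey property for comparabilities: for every finite poset P and every positive integer r, there exists a finite poset Q such that for every r-coloring of the comparable pairs of Q, there is a subposet P' of Q isomorphic to P all of whose comparable pairs receive the same color. Moreover, Q may be taken to be a grid n^t. -/
/-!
Code each `x` of a finite poset `α` by the vector `a ↦ #{y | y < x} + |α|·[a ≤ x]`. This is an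
order embedding into a grid, and `x < y` makes *every* coordinate strictly increase. Place the
`t` coordinates in consecutive blocks of a large set that is monochromatic, in Ramsey's sense,
for increasing `2t`-tuples. A comparable pair `x < y` then becomes the interleaved increasing
tuple `(f x)₀ < (f y)₀ < (f x)₁ < (f y)₁ < ⋯`, so colouring a tuple by the colour of the pair it
interleaves makes all comparable pairs of the copy `f α` monochromatic.
-/

open Finset

universe u

section Ramsey

variable {κ : Type*}

def IsMonochromatic {ι α : Type*} [Preorder ι] [Preorder α] (χ : (ι → α) → κ) (M : Finset α)
    (k : κ) : Prop :=
  ∀ v : ι → α, StrictMono v → (∀ i, v i ∈ M) → χ v = k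

def IsRamseyBound (ι κ : Type*) [Preorder ι] (s N : ℕ) : Prop :=
  ∀ {α : Type u} [LinearOrder α] (A : Finset α), N ≤ #A →
    ∀ χ : (ι → α) → κ, ∃ M ⊆ A, s ≤ #M ∧ ∃ k, IsMonochromatic χ M k

lemma isRamseyBound_fin_zero (s : ℕ) : IsRamseyBound.{u} (Fin 0) κ s s :=
  fun A hA χ => ⟨A, subset_rfl, hA, χ Fin.elim0, fun _ _ _ => congrArg χ (Subsingleton.elim _ _)⟩

lemma IsRamseyBound.of_orderIso {ι ι' : Type*} [Preorder ι] [Preorder ι'] (e : ι ≃o ι') {s N : ℕ}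
    (h : IsRamseyBound.{u} ι κ s N) : IsRamseyBound.{u} ι' κ s N := by
  intro α _ A hA χ
  obtain ⟨M, hMA, hM, k, hk⟩ := h A hA fun v => χ (v ∘ e.symm)
  refine ⟨M, hMA, hM, k, fun v hv hvM => ?_⟩
  simpa [Function.comp_def] using hk (v ∘ e) (hv.comp e.strictMono) fun i => hvM (e i)

-- Peel off the least element `a` of `A`, make `u ↦ χ (Fin.cons a u)` monochromatic on a large
-- part of the rest, and recurse inside that part.
lemma exists_endHomogeneous_s8 {m : ℕ} (hm : ∀ s, ∃ N, IsRamseyBound.{u} (Fin m) κ s N) (L : ℕ) :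
    ∃ N, ∀ {α : Type u} [LinearOrder α] (A : Finset α), N ≤ #A → ∀ χ : (Fin (m + 1) → α) → κ,
      ∃ B ⊆ A, L ≤ #B ∧ ∃ k : α → κ,
        ∀ v : Fin (m + 1) → α, StrictMono v → (∀ i, v i ∈ B) → χ v = k (v 0) := by
  induction L with
  | zero =>
    exact ⟨0, fun _ _ χ => ⟨∅, empty_subset _, le_rfl, fun a => χ fun _ => a,
      fun _ _ hv => absurd (hv 0) (notMem_empty _)⟩⟩
  | succ L ih =>
    obtain ⟨N', hN'⟩ := ih
    obtain ⟨N, hN⟩ := hm N'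
    refine ⟨N + 1, fun A hA χ => ?_⟩
    have hne : A.Nonempty := card_pos.mp (by omega)
    set a := A.min' hne
    have ha : a ∈ A := min'_mem A hne
    obtain ⟨M, hMA, hM, k₀, hk₀⟩ :=
      hN (A.erase a) (by rw [card_erase_of_mem ha]; omega) fun u => χ (Fin.cons a u)
    obtain ⟨B, hBM, hB, k, hk⟩ := hN' M hM χ
    have ha_lt : ∀ b ∈ B, a < b := fun b hb =>
      have hb' := hMA (hBM hb)
      lt_of_le_of_ne (min'_le A b (mem_of_mem_erase hb')) (ne_of_mem_erase hb').symm
    refine ⟨insert a B, insert_subset ha fun b hb => mem_of_mem_erase (hMA (hBM hb)), ?_,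
      Function.update k a k₀, fun v hv hvB => ?_⟩
    · rw [card_insert_of_notMem fun h => lt_irrefl a (ha_lt a h)]
      omega
    have hvB' (i : Fin (m + 1)) (hi : v i ≠ a) : v i ∈ B := (mem_insert.mp (hvB i)).resolve_left hi
    have ha_le : a ≤ v 0 := (mem_insert.mp (hvB 0)).elim ge_of_eq fun h => (ha_lt _ h).le
    by_cases h0 : v 0 = a
    · have hvk₀ := hk₀ (Fin.tail v) (hv.comp Fin.strictMono_succ) fun i =>
        hBM (hvB' _ (ha_le.trans_lt (hv (Fin.succ_pos i))).ne')
      have hv_cons : Fin.cons a (Fin.tail v) = v := h0 ▸ Fin.cons_self_tail v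
      rw [h0, Function.update_self]
      exact (congrArg χ hv_cons.symm).trans hvk₀
    · rw [Function.update_of_ne h0]
      exact hk v hv fun i => hvB' i ((lt_of_le_of_ne ha_le (Ne.symm h0)).trans_le
        (hv.monotone (Fin.zero_le i))).ne'

lemma exists_isRamseyBound_fin [Fintype κ] [Nonempty κ] (m s : ℕ) :
    ∃ N, IsRamseyBound.{u} (Fin m) κ s N := by
  classical
  induction m generalizing s with
  | zero => exact ⟨s, isRamseyBound_fin_zero s⟩
  | succ m ih =>
    obtain ⟨N, hN⟩ := exists_endHomogeneous_s8 ih (Fintype.card κ * s)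
    refine ⟨N, fun A hA χ => ?_⟩
    obtain ⟨B, hBA, hB, k, hk⟩ := hN A hA χ
    obtain ⟨c, -, hc⟩ := exists_le_card_fiber_of_mul_le_card_of_maps_to (f := k) (t := univ)
      (fun _ _ => mem_univ _) univ_nonempty (by rwa [card_univ])
    refine ⟨{b ∈ B | k b = c}, (filter_subset _ _).trans hBA, hc, c, fun v hv hvM => ?_⟩
    rw [hk v hv fun i => (mem_filter.mp (hvM i)).1]
    exact (mem_filter.mp (hvM 0)).2

theorem exists_isRamseyBound (ι : Type*) [Fintype ι] [LinearOrder ι] [Fintype κ] [Nonempty κ]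
    (s : ℕ) : ∃ N, IsRamseyBound.{u} ι κ s N := by
  obtain ⟨N, hN⟩ := exists_isRamseyBound_fin (κ := κ) (Fintype.card ι) s
  exact ⟨N, hN.of_orderIso (Fintype.orderIsoFinOfCardEq ι rfl)⟩

end Ramsey

lemma Finset.exists_orderEmbedding_of_card_le {ι α : Type*} [Fintype ι] [LinearOrder ι]
    [LinearOrder α] {M : Finset α} (h : Fintype.card ι ≤ #M) : ∃ g : ι ↪o α, ∀ i, g i ∈ M := by
  obtain ⟨T, hTM, hT⟩ := M.exists_subset_card_eq h
  exact ⟨(Fintype.orderIsoFinOfCardEq ι rfl).symm.toOrderEmbedding.trans (T.orderEmbOfFin hT),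
    fun _ => hTM (T.orderEmbOfFin_mem hT _)⟩

lemma strictMono_interleave_s8 {ι β : Type*} [Preorder ι] [Preorder β] {p q : ι → β}
    (h : ∀ j, p j < q j) :
    StrictMono fun z : ι ×ₗ Fin 2 =>
      toLex ((ofLex z).1, ![p (ofLex z).1, q (ofLex z).1] (ofLex z).2) := by
  rintro ⟨i, a⟩ ⟨j, b⟩ hab
  rcases Prod.Lex.toLex_lt_toLex.mp hab with hij | ⟨rfl, hab⟩
  · exact Prod.Lex.toLex_lt_toLex.mpr (Or.inl hij)
  · refine Prod.Lex.toLex_lt_toLex.mpr (Or.inr ⟨rfl, ?_⟩)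
    obtain ⟨rfl, rfl⟩ : a = 0 ∧ b = 1 := by dsimp only at hab; omega
    exact h i

section GridCode

variable {α : Type*} [Finite α] [PartialOrder α]

lemma ncard_Iio_lt_card (x : α) : (Set.Iio x).ncard < Nat.card α := by
  rw [← Set.ncard_univ]
  exact Set.ncard_lt_ncard <| Set.ssubset_univ_iff.mpr <|
    (Set.ne_univ_iff_exists_notMem _).mpr ⟨x, lt_irrefl x⟩

lemma strictMono_ncard_Iio : StrictMono fun x : α => (Set.Iio x).ncard :=
  fun _ _ h => Set.ncard_lt_ncard (Set.Iio_ssubset_Iio h)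

-- The rank term makes `x < y` increase every coordinate; the term `|α|·[a ≤ x]` dominates it, so
-- the coordinate `a = x` detects whether `x ≤ y`.
open Classical in
noncomputable def gridCode (x a : α) : ℕ :=
  (Set.Iio x).ncard + if a ≤ x then Nat.card α else 0

lemma gridCode_lt (x a : α) : gridCode x a < 2 * Nat.card α := by
  have := ncard_Iio_lt_card x
  unfold gridCode
  split <;> omega

lemma gridCode_lt_gridCode {x y : α} (h : x < y) (a : α) : gridCode x a < gridCode y a := by
  have : (Set.Iio x).ncard < (Set.Iio y).ncard := strictMono_ncard_Iio h
  unfold gridCode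
  by_cases hx : a ≤ x
  · rw [if_pos hx, if_pos (hx.trans h.le)]
    omega
  · rw [if_neg hx]
    split <;> omega

lemma forall_gridCode_le_iff {x y : α} : (∀ a, gridCode x a ≤ gridCode y a) ↔ x ≤ y := by
  refine ⟨fun h => ?_, fun h a => ?_⟩
  · by_contra hxy
    have hx := h x
    have hy := ncard_Iio_lt_card y
    simp only [gridCode, le_refl, if_true, hxy, if_false] at hx
    omega
  · rcases h.lt_or_eq with h | rfl
    exacts [(gridCode_lt_gridCode h a).le, le_rfl]

end GridCode

theorem exists_grid_embedding (α : Type*) [Finite α] [PartialOrder α] :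
    ∃ (t w : ℕ) (e : α → Fin t → Fin w),
      (∀ x y, x ≤ y ↔ e x ≤ e y) ∧ ∀ x y, x < y → ∀ j, e x j < e y j := by
  let σ := (Finite.equivFin α).symm
  refine ⟨Nat.card α, 2 * Nat.card α, fun x j => ⟨gridCode x (σ j), gridCode_lt _ _⟩,
    fun x y => ?_, fun x y h j => gridCode_lt_gridCode h _⟩
  rw [← forall_gridCode_le_iff, ← σ.forall_congr_right]
  rfl

/-- The class of all finite posets has the Ramsey property for
comparabilities; moreover the Ramsey poset can be taken to be a grid `n^t`. -/
theorem stmt_8 (α : Type) [Fintype α] [PartialOrder α] (r : ℕ) (hr : 0 < r) :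
    ∃ t n : ℕ, ∀ c : (Fin t → Fin n) → (Fin t → Fin n) → Fin r,
      ∃ f : α → (Fin t → Fin n),
        (∀ x y : α, x ≤ y ↔ f x ≤ f y) ∧
        ∃ k : Fin r, ∀ x y : α, x < y → c (f x) (f y) = k := by
  have : Nonempty (Fin r) := Fin.pos_iff_nonempty.mp hr
  obtain ⟨t, w, e, he, he_lt⟩ := exists_grid_embedding α
  obtain ⟨N, hN⟩ :=
    exists_isRamseyBound (κ := Fin r) (Fin t ×ₗ Fin 2) (Fintype.card (Fin t ×ₗ Fin w))
  refine ⟨t, N, fun c => ?_⟩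
  obtain ⟨M, -, hM, k, hk⟩ := hN (univ : Finset (Fin N)) (by simp)
    fun v => c (fun j => v (toLex (j, 0))) (fun j => v (toLex (j, 1)))
  obtain ⟨g, hg⟩ := exists_orderEmbedding_of_card_le hM
  refine ⟨fun x j => g (toLex (j, e x j)), fun x y => ?_, k, fun x y hxy => ?_⟩
  · simp [he x y, Pi.le_def, Prod.Lex.toLex_le_toLex]
  · exact hk _ (g.strictMono.comp (strictMono_interleave_s8 (he_lt x y hxy))) fun _ => hg _
end

section
/- For every positive integer d, the class of finite posets of order dimension at most d has the Ramsey property for comparabilities: for every finite poset P with dim(P) ≤ d and every r, there exists a finite poset Q with dim(Q) ≤ d such that every r-coloring of the comparable pairs of Q yields a subposet isomorphic to P all of whose comparable pairs have the same color. -/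
/-!
Ranking the elements of `P` in each of `d` linear extensions of a realizer embeds `P` into the
grid `[N]^d`, `N = |P|`, so that `x < y` makes every coordinate increase strictly. The grid
`[n]^d` has dimension at most `d` (sort by one coordinate, break ties lexicographically), and by
the product Ramsey theorem every `r`-colouring of its pairs is constant on the pairs `x < y`
that increase strictly in every coordinate inside some subgrid `b₁([N]) × ⋯ × b_d([N])`. The
product Ramsey theorem follows by induction on `d` from Ramsey's theorem for pairs, applied
with the colourings of the `(d - 1)`-dimensional grid as colours.
-/

/-- A poset has a realizer of size `d`: `d` linear extensions whose intersection is
the partial order.  (Order dimension at most `d`.) -/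
def HasRealizer (d : ℕ) (α : Type) [PartialOrder α] : Prop :=
  ∃ L : Fin d → α → α → Prop,
    (∀ i, IsLinearOrder α (L i)) ∧
    (∀ i, ∀ x y : α, x ≤ y → L i x y) ∧
    (∀ x y : α, (∀ i, L i x y) ↔ x ≤ y)

open Finset

theorem exists_subset_color_depends_on_min {α γ : Type*} [LinearOrder α] [Fintype γ]
    [Nonempty γ] (c : α → α → γ) (m : ℕ) (S : Finset α)
    (hS : (Fintype.card γ + 1) ^ m ≤ #S) :
    ∃ T ⊆ S, #T = m ∧ ∃ col : α → γ, ∀ x ∈ T, ∀ y ∈ T, x < y → c x y = col x := by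
  classical
  induction m generalizing S with
  | zero => exact ⟨∅, empty_subset _, rfl, Classical.arbitrary _, by simp⟩
  | succ m ih =>
    have hne : S.Nonempty := card_pos.mp (lt_of_lt_of_le (Nat.one_le_pow _ _ (by omega)) hS)
    set x := S.min' hne
    obtain ⟨t, -, ht⟩ := exists_le_card_fiber_of_mul_le_card_of_maps_to
      (f := c x) (s := S.erase x) (t := univ) (n := (Fintype.card γ + 1) ^ m)
      (fun _ _ => mem_univ _) univ_nonempty (by
        rw [card_erase_of_mem (S.min'_mem hne), card_univ]
        rw [pow_succ] at hS
        exact Nat.le_sub_one_of_lt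
          (by nlinarith [Nat.one_le_pow m (Fintype.card γ + 1) (by omega)]))
    obtain ⟨T, hTS, hT, col, hcol⟩ := ih _ ht
    have hxT : x ∉ T := fun h => by simpa using (mem_filter.mp (hTS h)).1
    have hxTS : insert x T ⊆ S :=
      insert_subset (S.min'_mem hne) fun y hy => mem_of_mem_erase (mem_filter.mp (hTS hy)).1
    refine ⟨insert x T, hxTS, ?_, Function.update col x t, ?_⟩
    · rw [card_insert_of_notMem hxT, hT]
    · intro y hy z hz hyz
      have hzT : z ∈ T :=
        (mem_insert.mp hz).resolve_left ((S.min'_le y (hxTS hy)).trans_lt hyz).ne'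
      rcases mem_insert.mp hy with rfl | hy
      · simpa using (mem_filter.mp (hTS hzT)).2
      · rw [Function.update_of_ne (ne_of_mem_of_not_mem hy hxT), hcol y hy z hzT hyz]

theorem exists_ramsey_pairs (γ : Type*) [Finite γ] [Nonempty γ] (k : ℕ) :
    ∃ n, ∀ c : Fin n → Fin n → γ,
      ∃ (s : Fin k ↪o Fin n) (t : γ), ∀ i j, i < j → c (s i) (s j) = t := by
  classical
  cases nonempty_fintype γ
  refine ⟨(Fintype.card γ + 1) ^ (Fintype.card γ * k), fun c => ?_⟩
  obtain ⟨T, -, hT, col, hcol⟩ :=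
    exists_subset_color_depends_on_min c _ univ (by rw [card_univ, Fintype.card_fin])
  obtain ⟨t, -, ht⟩ := exists_le_card_fiber_of_mul_le_card_of_maps_to (f := col) (s := T)
    (t := univ) (n := k) (fun _ _ => mem_univ _) univ_nonempty (by rw [card_univ, hT])
  obtain ⟨U, hU, hUk⟩ := exists_subset_card_eq ht
  have hUT : ∀ i, U.orderEmbOfFin hUk i ∈ filter (fun x => col x = t) T :=
    fun i => hU (U.orderEmbOfFin_mem hUk i)
  refine ⟨U.orderEmbOfFin hUk, t, fun i j hij => ?_⟩
  rw [hcol _ (mem_filter.mp (hUT i)).1 _ (mem_filter.mp (hUT j)).1 (by simpa using hij)]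
  exact (mem_filter.mp (hUT i)).2

def OrderEmbedding.piCongrRight {ι : Type*} {α β : ι → Type*} [∀ i, Preorder (α i)]
    [∀ i, Preorder (β i)] (e : ∀ i, α i ↪o β i) : (∀ i, α i) ↪o ∀ i, β i :=
  { toFun x i := e i (x i)
    inj' _ _ h := funext fun i => (e i).injective (congrFun h i)
    map_rel_iff' := forall_congr' fun i => (e i).le_iff_le }

theorem exists_product_ramsey (γ : Type*) [Finite γ] [Nonempty γ] (d k : ℕ) :
    ∃ n, ∀ c : (Fin d → Fin n) → (Fin d → Fin n) → γ,
      ∃ (b : Fin d → Fin k ↪o Fin n) (t : γ), ∀ x y : Fin d → Fin k, (∀ i, x i < y i) →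
        c (OrderEmbedding.piCongrRight b x) (OrderEmbedding.piCongrRight b y) = t := by
  induction d with
  | zero => exact ⟨0, fun c => ⟨isEmptyElim, c isEmptyElim isEmptyElim, fun x y _ => by
      congr <;> exact Subsingleton.elim _ _⟩⟩
  | succ d ih =>
    obtain ⟨n₀, hn₀⟩ := ih
    obtain ⟨n₁, hn₁⟩ := exists_ramsey_pairs ((Fin d → Fin n₀) → (Fin d → Fin n₀) → γ) k
    let ι₀ := Fin.castLEOrderEmb (le_max_left n₀ n₁)
    let ι₁ := Fin.castLEOrderEmb (le_max_right n₀ n₁)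
    refine ⟨max n₀ n₁, fun c => ?_⟩
    -- a pair of first coordinates is coloured by the colouring it induces on the other `d`
    obtain ⟨s, u, hs⟩ :=
      hn₁ fun a a' p q => c (Fin.cons (ι₁ a) (ι₀ ∘ p)) (Fin.cons (ι₁ a') (ι₀ ∘ q))
    obtain ⟨b, t, hb⟩ := hn₀ u
    refine ⟨Fin.cons (s.trans ι₁) fun i => (b i).trans ι₀, t, fun x y hxy => ?_⟩
    have split : ∀ z : Fin (d + 1) → Fin k, OrderEmbedding.piCongrRight
        (Fin.cons (s.trans ι₁) fun i => (b i).trans ι₀ : ∀ i, Fin k ↪o Fin (max n₀ n₁)) z =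
        Fin.cons (ι₁ (s (z 0))) (ι₀ ∘ OrderEmbedding.piCongrRight b (Fin.tail z)) := by
      intro z
      funext i
      cases i using Fin.cases <;> rfl
    rw [split, split, ← hb _ _ fun i => hxy i.succ]
    exact congrFun (congrFun (hs _ _ (hxy 0)) _) _

theorem isLinearOrder_comap {α β : Type*} [LinearOrder β] (g : α → β) (hg : g.Injective) :
    IsLinearOrder α fun x y => g x ≤ g y :=
  letI := LinearOrder.lift' g hg
  inferInstanceAs (IsLinearOrder α (· ≤ ·))

theorem hasRealizer_fin_pi (d : ℕ) (γ : Type) [LinearOrder γ] : HasRealizer d (Fin d → γ) := by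
  refine ⟨fun i f g => toLex (f i, toLex f) ≤ toLex (g i, toLex g),
    fun i => isLinearOrder_comap _ fun f g h => ?_,
    fun i f g hfg => Prod.Lex.toLex_mono ⟨hfg i, Pi.toLex_monotone hfg⟩,
    fun f g => ⟨fun h i => Prod.Lex.monotone_fst _ _ (h i), fun hfg i => ?_⟩⟩
  · exact toLex.injective (congrArg (fun p => (ofLex p).2) h)
  · exact Prod.Lex.toLex_mono ⟨hfg i, Pi.toLex_monotone hfg⟩

theorem IsLinearOrder.exists_rank {α : Type*} [Fintype α] (L : α → α → Prop) [IsLinearOrder α L] :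
    ∃ ρ : α → Fin (Fintype.card α), ∀ x y, L x y ↔ ρ x ≤ ρ y := by
  classical
  let _ : LinearOrder α :=
    { le := L
      le_refl := refl_of L
      le_trans := fun _ _ _ => trans_of L
      le_antisymm := fun _ _ => antisymm_of L
      le_total := total_of L
      toDecidableLE := inferInstance }
  let ρ := (Fintype.orderIsoFinOfCardEq α rfl).symm
  exact ⟨ρ, fun x y => (ρ.le_iff_le (x := x) (y := y)).symm⟩

theorem HasRealizer.exists_orderEmbedding_fin_pi {d : ℕ} {α : Type} [Fintype α] [PartialOrder α]
    (h : HasRealizer d α) :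
    ∃ e : α ↪o (Fin d → Fin (Fintype.card α)), ∀ x y, x < y → ∀ i, e x i < e y i := by
  obtain ⟨L, hlin, hext, hreal⟩ := h
  choose ρ hρ using fun i => @IsLinearOrder.exists_rank α _ (L i) (hlin i)
  refine ⟨.ofMapLEIff (fun x i => ρ i x) fun x y => ?_, fun x y hxy i => ?_⟩
  · simp only [Pi.le_def, ← hρ, hreal]
  · have := hlin i
    refine lt_of_le_of_ne ((hρ i x y).mp (hext i x y hxy.le)) fun hxy' => hxy.ne ?_
    exact antisymm_of (L i) (hext i x y hxy.le) ((hρ i y x).mpr hxy'.ge)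

theorem stmt_10_general (d : ℕ)
    (α : Type) [Fintype α] [PartialOrder α] (hα : HasRealizer d α)
    (r : ℕ) (hr : 0 < r) :
    ∃ (β : Type) (_ : Fintype β) (pβ : PartialOrder β),
      @HasRealizer d β pβ ∧
      ∀ c : β → β → Fin r,
        ∃ f : α → β,
          (∀ x y : α, x ≤ y ↔ pβ.le (f x) (f y)) ∧
          ∃ k : Fin r, ∀ x y : α, x < y → c (f x) (f y) = k := by
  have : Nonempty (Fin r) := ⟨⟨0, hr⟩⟩
  obtain ⟨e, he⟩ := hα.exists_orderEmbedding_fin_pi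
  obtain ⟨n, hn⟩ := exists_product_ramsey (Fin r) d (Fintype.card α)
  refine ⟨Fin d → Fin n, inferInstance, inferInstance, hasRealizer_fin_pi d (Fin n), fun c => ?_⟩
  obtain ⟨b, t, hb⟩ := hn c
  exact ⟨e.trans (OrderEmbedding.piCongrRight b), fun x y => (OrderEmbedding.le_iff_le _).symm,
    t, fun x y hxy => hb _ _ (he x y hxy)⟩

/-- For every `d > 0`, the class of finite posets of order dimension at
most `d` has the Ramsey property for comparabilities. -/
theorem stmt_10 (d : ℕ) (hd : 0 < d)
    (α : Type) [Fintype α] [PartialOrder α] (hα : HasRealizer d α)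
    (r : ℕ) (hr : 0 < r) :
    ∃ (β : Type) (_ : Fintype β) (pβ : PartialOrder β),
      @HasRealizer d β pβ ∧
      ∀ c : β → β → Fin r,
        ∃ f : α → β,
          (∀ x y : α, x ≤ y ↔ pβ.le (f x) (f y)) ∧
          ∃ k : Fin r, ∀ x y : α, x < y → c (f x) (f y) = k :=
  stmt_10_general d α hα r hr
end

section
/- Let s ≥ 1, l = s², P = s×s the 2-dimensional grid and Q = l×l. If f, g : P → Q are two casual embeddings, then f(P) = g(P) as subsets of Q, and the composition g⁻¹ ∘ f is an automorphism of P. -/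
/-!
Writing a casual embedding as `x ↦ (L x, M x)`, the maps `L` and `M` form a realizer of the grid,
so on an incomparable pair they disagree. Moving one point of an incomparable pair along a chain
does not change which of the two points `L` puts first, and any two incomparable pairs are joined
by such moves, so `L` orients all of them alike. Hence one of `L`, `M` is strictly monotone for
the lexicographic order and the other for the colexicographic one. A strictly monotone surjection
from a finite chain onto `Fin l` is unique, so a casual embedding is determined up to swapping the
two factors of the grid.
-/
/-- An order embedding of the grid `Fin s × Fin s` into the grid `Fin l × Fin l` is
casual if each of its two coordinate maps is a bijection onto `Fin l`. -/
def IsCasualEmbedding {s l : ℕ} (f : Fin s × Fin s → Fin l × Fin l) : Prop :=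
  (∀ x y : Fin s × Fin s, x ≤ y ↔ f x ≤ f y) ∧
  Function.Bijective (fun x : Fin s × Fin s => (f x).1) ∧
  Function.Bijective (fun x : Fin s × Fin s => (f x).2)

open Function

section Realizer

variable {P γ : Type*} [Preorder P] [LinearOrder γ]

def IsRealizer (L M : P → γ) : Prop :=
  ∀ x y, x ≤ y ↔ L x ≤ L y ∧ M x ≤ M y

namespace IsRealizer

variable {L M : P → γ}

theorem symm (h : IsRealizer L M) : IsRealizer M L :=
  fun x y => (h x y).trans and_comm

theorem comp_orderIso {Q : Type*} [Preorder Q] (h : IsRealizer L M) (e : Q ≃o P) :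
    IsRealizer (L ∘ e) (M ∘ e) :=
  fun x y => e.le_iff_le.symm.trans (h (e x) (e y))

theorem strictMono (h : IsRealizer L M) (hL : Injective L) : StrictMono L :=
  fun x y hxy => ((h x y).1 hxy.le).1.lt_of_ne (hL.ne hxy.ne)

theorem lt_of_not_le (h : IsRealizer L M) {x y : P} (hxy : ¬ x ≤ y) (hL : L x ≤ L y) :
    M y < M x :=
  not_le.1 fun hM => hxy ((h x y).2 ⟨hL, hM⟩)

theorem lt_iff_lt_of_not_le (h : IsRealizer L M) {x y : P} (hxy : ¬ x ≤ y) (hyx : ¬ y ≤ x) :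
    L x < L y ↔ M y < M x :=
  ⟨fun hL => h.lt_of_not_le hxy hL.le,
    fun hM => not_le.1 fun hL => lt_asymm hM (h.lt_of_not_le hyx hL)⟩

end IsRealizer

end Realizer

section Grid

variable {α β γ : Type*} [LinearOrder α] [LinearOrder β] [LinearOrder γ] {L M : α × β → γ}

namespace IsRealizer

theorem lt_iff_lt_of_fst_lt_of_snd_lt (h : IsRealizer L M) {x y : α × β} (h₁ : x.1 < y.1)
    (h₂ : y.2 < x.2) : L x < L y ↔ M y < M x :=
  h.lt_iff_lt_of_not_le (fun hle => h₂.not_ge hle.2) (fun hle => h₁.not_ge hle.1)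

theorem lt_iff_of_le_left (h : IsRealizer L M) {x x' y : α × β} (hx : x ≤ x')
    (h₁ : x'.1 < y.1) (h₂ : y.2 < x.2) : L x < L y ↔ L x' < L y := by
  have h₁' : x.1 < y.1 := hx.1.trans_lt h₁
  have h₂' : y.2 < x'.2 := h₂.trans_le hx.2
  obtain ⟨hL, hM⟩ := (h x x').1 hx
  refine ⟨fun hxy => ?_, hL.trans_lt⟩
  exact (h.lt_iff_lt_of_fst_lt_of_snd_lt h₁ h₂').2
    (((h.lt_iff_lt_of_fst_lt_of_snd_lt h₁' h₂).1 hxy).trans_le hM)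

theorem lt_iff_of_le_right (h : IsRealizer L M) {x y y' : α × β} (hy : y ≤ y')
    (h₁ : x.1 < y.1) (h₂ : y'.2 < x.2) : L x < L y ↔ L x < L y' := by
  have h₁' : x.1 < y'.1 := h₁.trans_le hy.1
  have h₂' : y.2 < x.2 := hy.2.trans_lt h₂
  obtain ⟨hL, hM⟩ := (h y y').1 hy
  refine ⟨fun hxy => hxy.trans_le hL, fun hxy' => ?_⟩
  exact (h.lt_iff_lt_of_fst_lt_of_snd_lt h₁ h₂').2
    (hM.trans_lt ((h.lt_iff_lt_of_fst_lt_of_snd_lt h₁' h₂).1 hxy'))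

theorem lt_iff_lt_of_spread (h : IsRealizer L M) {x y X Y : α × β} (hX₁ : X.1 ≤ x.1)
    (hX₂ : x.2 ≤ X.2) (hY₁ : y.1 ≤ Y.1) (hY₂ : Y.2 ≤ y.2) (h₁ : x.1 < y.1) (h₂ : y.2 < x.2) :
    L x < L y ↔ L X < L Y := by
  have hX₁' : X.1 < y.1 := hX₁.trans_lt h₁
  have hX₂' : y.2 < X.2 := h₂.trans_le hX₂
  calc L x < L y
      ↔ L (X.1, x.2) < L y := (h.lt_iff_of_le_left (x := (X.1, x.2)) ⟨hX₁, le_rfl⟩ h₁ h₂).symm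
    _ ↔ L X < L y := h.lt_iff_of_le_left (x := (X.1, x.2)) ⟨le_rfl, hX₂⟩ hX₁' h₂
    _ ↔ L X < L (y.1, Y.2) :=
      (h.lt_iff_of_le_right (y := (y.1, Y.2)) (y' := y) ⟨le_rfl, hY₂⟩ hX₁' hX₂').symm
    _ ↔ L X < L Y :=
      h.lt_iff_of_le_right (y := (y.1, Y.2)) ⟨hY₁, le_rfl⟩ hX₁' (hY₂.trans_lt hX₂')

theorem lt_iff_lt_of_incomparable (h : IsRealizer L M) {x y x' y' : α × β}
    (h₁ : x.1 < y.1) (h₂ : y.2 < x.2) (h₁' : x'.1 < y'.1) (h₂' : y'.2 < x'.2) :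
    L x < L y ↔ L x' < L y' :=
  (h.lt_iff_lt_of_spread (X := (x.1 ⊓ x'.1, x.2 ⊔ x'.2)) (Y := (y.1 ⊔ y'.1, y.2 ⊓ y'.2))
    inf_le_left le_sup_left le_sup_left inf_le_left h₁ h₂).trans
  (h.lt_iff_lt_of_spread inf_le_right le_sup_right le_sup_right inf_le_right h₁' h₂').symm

theorem strictMono_lex (h : IsRealizer L M) (hL : Injective L)
    (hO : ∀ x y : α × β, x.1 < y.1 → y.2 < x.2 → L x < L y) : StrictMono (L ∘ ofLex) := by
  intro a b hab
  rcases Prod.Lex.lt_iff.1 hab with h₁ | ⟨h₁, h₂⟩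
  · rcases lt_or_ge (ofLex b).2 (ofLex a).2 with h₂ | h₂
    · exact hO _ _ h₁ h₂
    · exact h.strictMono hL (Prod.lt_of_lt_of_le h₁ h₂)
  · exact h.strictMono hL (Prod.lt_of_le_of_lt h₁.le h₂)

theorem strictMono_lex_swap (h : IsRealizer L M) (hM : Injective M)
    (hO : ∀ x y : α × β, x.1 < y.1 → y.2 < x.2 → L x < L y) :
    StrictMono (M ∘ Prod.swap ∘ ofLex) :=
  (h.symm.comp_orderIso OrderIso.prodComm).strictMono_lex (hM.comp Prod.swap_injective)
    fun _ _ h₁ h₂ => (h.lt_iff_lt_of_fst_lt_of_snd_lt h₂ h₁).1 (hO _ _ h₂ h₁)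

theorem forall_lt_or_forall_lt (h : IsRealizer L M) :
    (∀ x y : α × β, x.1 < y.1 → y.2 < x.2 → L x < L y) ∨
      ∀ x y : α × β, x.1 < y.1 → y.2 < x.2 → M x < M y := by
  refine or_iff_not_imp_left.2 fun hL => ?_
  push Not at hL
  obtain ⟨x, y, h₁, h₂, hyx⟩ := hL
  have hMxy : M x < M y := h.lt_of_not_le (fun hle => h₁.not_ge hle.1) hyx
  exact fun x' y' h₁' h₂' => (h.symm.lt_iff_lt_of_incomparable h₁ h₂ h₁' h₂').1 hMxy

end IsRealizer

end Grid

section LexColex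

variable {α β γ δ : Type*} [LinearOrder α] [LinearOrder β] [LinearOrder γ] [LinearOrder δ]

theorem eq_of_strictMono_lex [WellFoundedLT α] [WellFoundedLT β] {L L' : α × β → γ}
    (h : StrictMono (L ∘ ofLex)) (h' : StrictMono (L' ∘ ofLex)) (hs : Surjective L)
    (hs' : Surjective L') : L = L' := by
  have hrange : Set.range (L ∘ ofLex) = Set.range (L' ∘ ofLex) :=
    (hs.comp ofLex.surjective).range_eq.trans (hs'.comp ofLex.surjective).range_eq.symm
  exact funext fun x => congrFun ((h.range_inj h').1 hrange) (toLex x)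

/-- The colexicographic order on `α × β` is encoded as the lexicographic order on `β × α`. -/
def IsLexColex (f : α × β → γ × δ) : Prop :=
  StrictMono ((fun x => (f x).1) ∘ ofLex) ∧
    StrictMono ((fun x => (f x).2) ∘ Prod.swap ∘ ofLex)

theorem IsLexColex.eq [WellFoundedLT α] [WellFoundedLT β] {f g : α × β → γ × δ}
    (hf : IsLexColex f) (hg : IsLexColex g) (hf₁ : Surjective fun x => (f x).1)
    (hf₂ : Surjective fun x => (f x).2) (hg₁ : Surjective fun x => (g x).1)
    (hg₂ : Surjective fun x => (g x).2) : f = g :=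
  funext fun x => Prod.ext (congrFun (eq_of_strictMono_lex hf.1 hg.1 hf₁ hg₁) x)
    (congrFun (eq_of_strictMono_lex (L := fun x => (f x.swap).2) hf.2 hg.2
      (hf₂.comp Prod.swap_surjective) (hg₂.comp Prod.swap_surjective)) x.swap)

end LexColex

namespace IsCasualEmbedding

variable {s l : ℕ} {f g : Fin s × Fin s → Fin l × Fin l}

theorem isRealizer (hf : IsCasualEmbedding f) :
    IsRealizer (fun x => (f x).1) (fun x => (f x).2) :=
  fun x y => (hf.1 x y).trans Prod.le_def

theorem comp_orderIso (hf : IsCasualEmbedding f) (e : (Fin s × Fin s) ≃o (Fin s × Fin s)) :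
    IsCasualEmbedding (f ∘ e) :=
  ⟨fun x y => e.le_iff_le.symm.trans (hf.1 (e x) (e y)), hf.2.1.comp e.bijective,
    hf.2.2.comp e.bijective⟩

theorem exists_isLexColex_comp (hf : IsCasualEmbedding f) :
    ∃ e : (Fin s × Fin s) ≃o (Fin s × Fin s), IsLexColex (f ∘ e) := by
  have h := hf.isRealizer
  rcases h.forall_lt_or_forall_lt with hO | hO
  · exact ⟨OrderIso.refl _, h.strictMono_lex hf.2.1.injective hO,
      h.strictMono_lex_swap hf.2.2.injective hO⟩
  · exact ⟨OrderIso.prodComm, h.symm.strictMono_lex_swap hf.2.1.injective hO,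
      h.symm.strictMono_lex hf.2.2.injective hO⟩

theorem eq_of_isLexColex (hf : IsCasualEmbedding f) (hg : IsCasualEmbedding g)
    (hf' : IsLexColex f) (hg' : IsLexColex g) : f = g :=
  hf'.eq hg' hf.2.1.surjective hf.2.2.surjective hg.2.1.surjective hg.2.2.surjective

end IsCasualEmbedding

theorem stmt_11_general (s : ℕ)
    (f g : Fin s × Fin s → Fin (s * s) × Fin (s * s))
    (hf : IsCasualEmbedding f) (hg : IsCasualEmbedding g) :
    Set.range f = Set.range g ∧
      ∃ e : (Fin s × Fin s) ≃o (Fin s × Fin s), ∀ x, f x = g (e x) := by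
  obtain ⟨e₁, he₁⟩ := hf.exists_isLexColex_comp
  obtain ⟨e₂, he₂⟩ := hg.exists_isLexColex_comp
  have hfg : f ∘ e₁ = g ∘ e₂ :=
    (hf.comp_orderIso e₁).eq_of_isLexColex (hg.comp_orderIso e₂) he₁ he₂
  have he : ∀ x, f x = g ((e₁.symm.trans e₂) x) := fun x => by
    simpa using congrFun hfg (e₁.symm x)
  exact ⟨(congrArg Set.range (funext he)).trans ((e₁.symm.trans e₂).surjective.range_comp g),
    e₁.symm.trans e₂, he⟩

/-- For `s ≥ 1` and `l = s²`, any two casual embeddings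
`f, g : s×s → l×l` have the same image, and `g⁻¹ ∘ f` is an automorphism of `s×s`. -/
theorem stmt_11 (s : ℕ) (hs : 1 ≤ s)
    (f g : Fin s × Fin s → Fin (s * s) × Fin (s * s))
    (hf : IsCasualEmbedding f) (hg : IsCasualEmbedding g) :
    Set.range f = Set.range g ∧
      ∃ e : (Fin s × Fin s) ≃o (Fin s × Fin s), ∀ x, f x = g (e x) :=
  stmt_11_general s f g hf hg
end

section
/- Let s ≥ 1 and l = s². The maps f, g : s×s → l×l defined by f((i,j)) = (s·i + j, s·j + i) and g((i,j)) = (s·j + i, s·i + j) are both casual order embeddings of the grid s×s into the grid l×l, and f(s×s) = g(s×s). -/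
/-!
Both coordinates of `f(i,j) = (s·i + j, s·j + i)` are base-`s` digit encodings
(`finProdFinEquiv`, up to swapping the digits), hence bijections onto `Fin (s * s)`. The encoding
is monotone and its leading digit can be read off by dividing by `s`, so `f` reflects the
componentwise order: the first coordinate recovers `i`, the second `j`. Finally `g = f ∘ Prod.swap`,
and precomposing with the order automorphism `Prod.swap` preserves casualness and the image.
-/

theorem finProdFinEquiv_le_finProdFinEquiv {m n : ℕ} {p q : Fin m × Fin n} (h : p ≤ q) :
    finProdFinEquiv p ≤ finProdFinEquiv q := by
  rw [Fin.le_def, finProdFinEquiv_apply_val, finProdFinEquiv_apply_val]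
  exact Nat.add_le_add h.2 (Nat.mul_le_mul_left n h.1)

theorem fst_le_of_finProdFinEquiv_le {m n : ℕ} {p q : Fin m × Fin n}
    (h : finProdFinEquiv p ≤ finProdFinEquiv q) : p.1 ≤ q.1 := by
  have hn : 0 < n := p.2.pos
  rw [Fin.le_def, finProdFinEquiv_apply_val, finProdFinEquiv_apply_val] at h
  have := Nat.div_le_div_right (c := n) h
  rwa [Nat.add_mul_div_left _ _ hn, Nat.add_mul_div_left _ _ hn, Nat.div_eq_of_lt p.2.isLt,
    Nat.div_eq_of_lt q.2.isLt, zero_add, zero_add, ← Fin.le_def] at this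

theorem isCasualEmbedding_finProdFinEquiv_pair (s : ℕ) :
    IsCasualEmbedding fun p : Fin s × Fin s => (finProdFinEquiv p, finProdFinEquiv p.swap) := by
  refine ⟨fun p q => ⟨fun h => ?_, fun h => ?_⟩, finProdFinEquiv.bijective,
    finProdFinEquiv.bijective.comp Prod.swap_bijective⟩
  · exact ⟨finProdFinEquiv_le_finProdFinEquiv h,
      finProdFinEquiv_le_finProdFinEquiv (Prod.swap_le_swap.mpr h)⟩
  · exact ⟨fst_le_of_finProdFinEquiv_le h.1, fst_le_of_finProdFinEquiv_le h.2⟩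

theorem IsCasualEmbedding.comp_swap {s l : ℕ} {f : Fin s × Fin s → Fin l × Fin l}
    (hf : IsCasualEmbedding f) : IsCasualEmbedding (f ∘ Prod.swap) :=
  ⟨fun p q => Prod.swap_le_swap.symm.trans (hf.1 p.swap q.swap),
    hf.2.1.comp Prod.swap_bijective, hf.2.2.comp Prod.swap_bijective⟩

/-- For `s ≥ 1` and `l = s²`, the maps `f(i,j) = (s·i+j, s·j+i)` and
`g(i,j) = (s·j+i, s·i+j)` are casual order embeddings of `s×s` into `l×l` with the
same image. -/
theorem stmt_12 (s : ℕ)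
    (f g : Fin s × Fin s → Fin (s * s) × Fin (s * s))
    (hfdef : ∀ p : Fin s × Fin s,
      f p = (⟨s * p.1.val + p.2.val, by
              have h1 := p.1.isLt; have h2 := p.2.isLt; nlinarith⟩,
             ⟨s * p.2.val + p.1.val, by
              have h1 := p.1.isLt; have h2 := p.2.isLt; nlinarith⟩))
    (hgdef : ∀ p : Fin s × Fin s,
      g p = (⟨s * p.2.val + p.1.val, by
              have h1 := p.1.isLt; have h2 := p.2.isLt; nlinarith⟩,
             ⟨s * p.1.val + p.2.val, by
              have h1 := p.1.isLt; have h2 := p.2.isLt; nlinarith⟩)) :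
    IsCasualEmbedding f ∧ IsCasualEmbedding g ∧ Set.range f = Set.range g := by
  have hf_eq : f = fun p => (finProdFinEquiv p, finProdFinEquiv p.swap) := by
    funext p
    rw [hfdef p]
    ext <;> simp [finProdFinEquiv_apply_val, add_comm]
  have hg_eq : g = f ∘ Prod.swap := by
    funext p
    rw [hgdef p, Function.comp_apply, hfdef p.swap]
    rfl
  have hf : IsCasualEmbedding f := hf_eq ▸ isCasualEmbedding_finProdFinEquiv_pair s
  exact ⟨hf, hg_eq ▸ hf.comp_swap, by rw [hg_eq, Prod.swap_surjective.range_comp]⟩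
end

section
/- If the class of finite planar posets has the Ramsey property for comparabilities, then the Boolean dimension of finite planar posets is unbounded: for every k there exists a planar poset P with Boolean dimension greater than k. -/
/-- A finite poset is planar if its order diagram (Hasse diagram) can be drawn in the
plane: vertices are distinct points, each cover relation `u ⋖ v` is drawn as an
injective arc from `u` to `v` that strictly increases in the second (vertical)
coordinate, and arcs of distinct cover edges meet only in common endpoints. -/
def IsPlanarPoset (α : Type) [PartialOrder α] : Prop :=
  ∃ pos : α → ℝ × ℝ, Function.Injective pos ∧
    ∃ arc : ∀ ⦃u v : α⦄, u ⋖ v → Path (pos u) (pos v),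
      (∀ ⦃u v : α⦄ (h : u ⋖ v), Function.Injective (arc h)) ∧
      (∀ ⦃u v : α⦄ (h : u ⋖ v), StrictMono fun t : unitInterval => ((arc h) t).2) ∧
      (∀ ⦃u v u' v' : α⦄ (h : u ⋖ v) (h' : u' ⋖ v'), (u, v) ≠ (u', v') →
        ∀ x y : unitInterval, arc h x = arc h' y →
          arc h x ∈ ({pos u, pos v} ∩ {pos u', pos v'} : Set (ℝ × ℝ)))

/-- `(L, S)` is a Boolean realizer of size `d` of a poset: `L` is a family of `d`
linear orders on the elements and `S` a set of length-`d` "bit strings" (here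
`Fin d → Prop`) such that for distinct `x, y` we have `x < y` iff the signature
`fun i => L i x y` belongs to `S`. -/
def IsBooleanRealizer {α : Type} [PartialOrder α] {d : ℕ}
    (L : Fin d → α → α → Prop) (S : Set (Fin d → Prop)) : Prop :=
  (∀ i, IsLinearOrder α (L i)) ∧
  ∀ x y : α, x ≠ y → (x < y ↔ (fun i => L i x y) ∈ S)

namespace Stmt15

inductive KV (n : ℕ) : Type
  | A (i : Fin n) | U (i : Fin n) | V (i : Fin n) | B (i : Fin n)
  deriving DecidableEq, Fintype

namespace KV

variable {n : ℕ}

def kle : KV n → KV n → Prop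
  | A i, A j => i = j
  | A i, U j => (i : ℕ) < j
  | A i, V j => n ≤ (i : ℕ) + j
  | A i, B j => i ≠ j
  | U i, U j => (i : ℕ) ≤ j
  | U i, B j => (i : ℕ) ≤ j
  | V i, V j => (i : ℕ) ≤ j
  | V i, B j => (i : ℕ) + j < n
  | B i, B j => i = j
  | _, _ => False

instance : PartialOrder (KV n) where
  le := kle
  le_refl x := by cases x <;> simp [kle]
  le_trans x y z hxy hyz := by
    cases x <;> cases y <;> cases z <;>
      simp only [kle, Fin.ext_iff, ne_eq] at * <;> omega
  le_antisymm x y hxy hyx := by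
    cases x <;> cases y <;>
      simp only [kle, A.injEq, U.injEq, V.injEq, B.injEq, Fin.ext_iff, ne_eq] at * <;> omega

lemma le_def {x y : KV n} : x ≤ y ↔ kle x y := Iff.rfl

lemma lt_mk {x y : KV n} (h1 : kle x y) (h2 : ¬ kle y x) : x < y :=
  lt_of_le_of_lt (le_refl x) (lt_of_le_not_ge h1 h2)

lemma a_not_le_b (i : Fin n) : ¬ (A i ≤ B i) := by
  simp [le_def, kle]

lemma a_le_b {i j : Fin n} (h : i ≠ j) : A i ≤ B j := h

/-- no Dushnik–Miller style realizer of size `d < n`. -/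
lemma no_realizer {d : ℕ} (hd : d < n) (M : Fin d → KV n → KV n → Prop)
    (htot : ∀ m (x y : KV n), x ≠ y → ¬ M m x y → M m y x)
    (htrans : ∀ m (x y z : KV n), M m x y → M m y z → M m x z)
    (hiff : ∀ x y : KV n, x ≤ y ↔ ∀ m, M m x y) : False := by
  have hex : ∀ i : Fin n, ∃ m : Fin d, ¬ M m (A i) (B i) := by
    intro i
    by_contra hc
    push_neg at hc
    exact a_not_le_b i ((hiff _ _).2 hc)
  choose φ hφ using hex
  have hcard : Fintype.card (Fin d) < Fintype.card (Fin n) := by simpa using hd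
  obtain ⟨i, i', hne, hphi⟩ := Fintype.exists_ne_map_eq_of_card_lt φ hcard
  set m := φ i with hm
  have h1 : ¬ M m (A i) (B i) := hφ i
  have h2 : ¬ M m (A i') (B i') := hphi ▸ hφ i'
  have hne' : i ≠ i' := hne
  have h3 : M m (A i) (B i') := (hiff _ _).1 (a_le_b hne') m
  have h4 : M m (A i') (B i) := (hiff _ _).1 (a_le_b (Ne.symm hne')) m
  have h5 : M m (B i') (A i') := htot m _ _ (by simp) h2
  exact h1 (htrans m _ _ _ (htrans m _ _ _ h3 h5) h4)

end KV

noncomputable def segPath (p q : ℝ × ℝ) : Path p q where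
  toFun t := (1 - (t : ℝ)) • p + (t : ℝ) • q
  continuous_toFun := by
    apply Continuous.add
    · exact (continuous_const.sub continuous_subtype_val).smul continuous_const
    · exact continuous_subtype_val.smul continuous_const
  source' := by simp
  target' := by simp

lemma segPath_mem (p q : ℝ × ℝ) (t : unitInterval) :
    segPath p q t ∈ segment ℝ p q := by
  exact ⟨1 - (t : ℝ), (t : ℝ), by linarith [t.2.2], t.2.1, by ring, rfl⟩

lemma segPath_strict {p q : ℝ × ℝ} (h : p.2 < q.2) :
    StrictMono (fun t : unitInterval => ((segPath p q) t).2) := by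
  intro s t hst
  simp only [segPath, Path.coe_mk_mk]
  have hst' : (s : ℝ) < t := hst
  simp only [Prod.snd_add, Prod.smul_snd, smul_eq_mul]
  nlinarith [hst']

/-- piecewise linear scalar function through a b c d -/
noncomputable def pw (a b c d : ℝ) (t : ℝ) : ℝ :=
  if t ≤ 1/3 then a + 3*t*(b-a) else if t ≤ 2/3 then b + (3*t-1)*(c-b) else c + (3*t-2)*(d-c)

lemma pw_cont (a b c d : ℝ) : Continuous (pw a b c d) := by
  unfold pw
  apply Continuous.if_le
  · continuity
  · apply Continuous.if_le
    · continuity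
    · continuity
    · exact continuous_id
    · exact continuous_const
    · intro x hx; rw [hx]; norm_num
  · exact continuous_id
  · exact continuous_const
  · intro x hx
    rw [hx]
    norm_num

noncomputable def hookFun (p0 p1 p2 p3 : ℝ × ℝ) (t : ℝ) : ℝ × ℝ :=
  (pw p0.1 p1.1 p2.1 p3.1 t, pw p0.2 p1.2 p2.2 p3.2 t)

noncomputable def hookPath (p0 p1 p2 p3 : ℝ × ℝ) : Path p0 p3 where
  toFun t := hookFun p0 p1 p2 p3 t
  continuous_toFun := by
    exact ((pw_cont _ _ _ _).prodMk (pw_cont _ _ _ _)).comp continuous_subtype_val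
  source' := by
    simp only [hookFun, pw]
    norm_num
  target' := by
    simp only [hookFun, pw]
    norm_num

lemma hookPath_mem (p0 p1 p2 p3 : ℝ × ℝ) (t : unitInterval) :
    hookPath p0 p1 p2 p3 t ∈
      segment ℝ p0 p1 ∪ segment ℝ p1 p2 ∪ segment ℝ p2 p3 := by
  have h0 : (0:ℝ) ≤ t := t.2.1
  have h1 : (t:ℝ) ≤ 1 := t.2.2
  show hookFun p0 p1 p2 p3 (t:ℝ) ∈ _
  unfold hookFun pw
  split_ifs with ht1 ht2
  · refine Or.inl (Or.inl ⟨1 - 3*(t:ℝ), 3*(t:ℝ), by linarith, by linarith, by ring, ?_⟩)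
    apply Prod.ext <;> simp [Prod.smul_fst, Prod.smul_snd] <;> ring
  · refine Or.inl (Or.inr ⟨1 - (3*(t:ℝ)-1), 3*(t:ℝ)-1, by linarith, by linarith, by ring, ?_⟩)
    apply Prod.ext <;> simp [Prod.smul_fst, Prod.smul_snd] <;> ring
  · refine Or.inr ⟨1 - (3*(t:ℝ)-2), 3*(t:ℝ)-2, by linarith, by linarith, by ring, ?_⟩
    apply Prod.ext <;> simp [Prod.smul_fst, Prod.smul_snd] <;> ring

lemma pw_strictMonoOn {a b c d : ℝ} (hab : a < b) (hbc : b < c) (hcd : c < d) :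
    StrictMonoOn (pw a b c d) (Set.Icc (0:ℝ) 1) := by
  intro s hs t ht hst
  unfold pw
  split_ifs <;> nlinarith [hs.1, hs.2, ht.1, ht.2]

lemma hookPath_strict {p0 p1 p2 p3 : ℝ × ℝ}
    (h01 : p0.2 < p1.2) (h12 : p1.2 < p2.2) (h23 : p2.2 < p3.2) :
    StrictMono (fun t : unitInterval => ((hookPath p0 p1 p2 p3) t).2) := by
  intro s t hst
  exact pw_strictMonoOn h01 h12 h23 s.2 t.2 hst

/-! ### segment separation lemmas -/

lemma seg_le {p q z : ℝ × ℝ} (hz : z ∈ segment ℝ p q) (a b C : ℝ)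
    (hp : a*p.1 + b*p.2 ≤ C) (hq : a*q.1 + b*q.2 ≤ C) : a*z.1 + b*z.2 ≤ C := by
  obtain ⟨u, v, hu, hv, huv, rfl⟩ := hz
  simp only [Prod.fst_add, Prod.snd_add, Prod.smul_fst, Prod.smul_snd, smul_eq_mul]
  have hC : u*C + v*C = C := by rw [← add_mul, huv, one_mul]
  nlinarith [mul_le_mul_of_nonneg_left hp hu, mul_le_mul_of_nonneg_left hq hv, hC]

lemma seg_ge {p q z : ℝ × ℝ} (hz : z ∈ segment ℝ p q) (a b C : ℝ)
    (hp : C ≤ a*p.1 + b*p.2) (hq : C ≤ a*q.1 + b*q.2) : C ≤ a*z.1 + b*z.2 := by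
  have := seg_le hz (-a) (-b) (-C) (by linarith) (by linarith)
  linarith

lemma seg_eq_right {p q z : ℝ × ℝ} (hz : z ∈ segment ℝ p q) (a b C : ℝ)
    (hp : a*p.1 + b*p.2 < C) (hq : a*q.1 + b*q.2 = C) (hzC : a*z.1 + b*z.2 = C) :
    z = q := by
  obtain ⟨u, v, hu, hv, huv, rfl⟩ := hz
  simp only [Prod.fst_add, Prod.snd_add, Prod.smul_fst, Prod.smul_snd, smul_eq_mul] at hzC
  have expand : a*(u*p.1+v*q.1)+b*(u*p.2+v*q.2) = u*(a*p.1+b*p.2) + v*(a*q.1+b*q.2) := by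
    ring
  rw [expand, hq] at hzC
  have hC : u*C + v*C = C := by rw [← add_mul, huv, one_mul]
  have hu0 : u = 0 := by
    rcases eq_or_lt_of_le hu with h | h
    · exact h.symm
    · exfalso
      nlinarith [mul_lt_mul_of_pos_left hp h, hC]
  subst hu0
  have hv1 : v = 1 := by linarith
  subst hv1
  simp

lemma seg_eq_left {p q z : ℝ × ℝ} (hz : z ∈ segment ℝ p q) (a b C : ℝ)
    (hp : a*p.1 + b*p.2 = C) (hq : a*q.1 + b*q.2 < C) (hzC : a*z.1 + b*z.2 = C) :
    z = p := by
  rw [segment_symm] at hz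
  exact seg_eq_right hz a b C hq hp hzC



open KV

variable {n : ℕ}

noncomputable def pos : KV n → ℝ × ℝ
  | A i => (1, 2*(n:ℝ) - 3 - 2*(i:ℕ))
  | U t => ((n:ℝ) + 3, 2*(n:ℝ) + 2*(t:ℕ))
  | V t => (0, 2*((t:ℕ):ℝ))
  | B j => (-(3*(n:ℝ) + 2 + 4*(j:ℕ)), 5*(n:ℝ) + 2*(j:ℕ))

lemma pos_inj : Function.Injective (pos (n := n)) := by
  intro x y h
  have hn : (0:ℝ) ≤ (n:ℝ) := Nat.cast_nonneg n
  rcases x with i|i|i|i <;> rcases y with j|j|j|j <;>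
    simp only [pos, Prod.mk.injEq] at h <;>
    first
      | (refine congrArg _ (Fin.ext ?_)
         have h2 := h.2
         have hij : ((i:ℕ):ℝ) = ((j:ℕ):ℝ) := by linarith
         exact_mod_cast hij)
      | (exfalso
         have hi : (0:ℝ) ≤ ((i:ℕ):ℝ) := Nat.cast_nonneg _
         have hj : (0:ℝ) ≤ ((j:ℕ):ℝ) := Nat.cast_nonneg _
         nlinarith [h.1])

/-! cover facts -/

lemma not_cov_AA {i j : Fin n} (h : A i ⋖ A j) : False := by
  have h1 : kle (A i) (A j) := h.1.le
  have h2 : i = j := h1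
  exact h.1.ne (congrArg A h2)

lemma not_cov_BB {i j : Fin n} (h : B i ⋖ B j) : False := by
  have h1 : kle (B i) (B j) := h.1.le
  have h2 : i = j := h1
  exact h.1.ne (congrArg B h2)

lemma not_cov_AB {i j : Fin n} (h : A i ⋖ B j) : False := by
  have h1 : kle (A i) (B j) := h.1.le
  have hij : i ≠ j := h1
  rcases Nat.lt_or_ge (i : ℕ) (j : ℕ) with hlt | hge
  · have hi1 : (i : ℕ) + 1 < n := lt_of_le_of_lt hlt j.isLt
    refine h.2 (c := U ⟨(i:ℕ)+1, hi1⟩) ?_ ?_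
    · exact KV.lt_mk (by show (i:ℕ) < (i:ℕ)+1; omega) (by show False → _; exact False.elim)
    · exact KV.lt_mk (by show (i:ℕ)+1 ≤ (j:ℕ); omega) (by show False → _; exact False.elim)
  · have hji : (j : ℕ) < (i : ℕ) := by
      rcases Nat.lt_or_ge (j:ℕ) (i:ℕ) with h' | h'
      · exact h'
      · exact absurd (Fin.ext (le_antisymm h' hge)) hij
    have hi0 : 1 ≤ (i : ℕ) := by omega
    have hni : n - (i:ℕ) < n := by omega
    refine h.2 (c := V ⟨n - (i:ℕ), hni⟩) ?_ ?_
    · exact KV.lt_mk (by show n ≤ (i:ℕ) + (n - (i:ℕ)); omega)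
        (by show False → _; exact False.elim)
    · exact KV.lt_mk (by show (n - (i:ℕ)) + (j:ℕ) < n; omega)
        (by show False → _; exact False.elim)

lemma cov_VV {s t : Fin n} (h : V s ⋖ V t) : (t:ℕ) = (s:ℕ) + 1 := by
  have h1 : (s:ℕ) ≤ t := h.1.le
  have hne : (s:ℕ) ≠ t := fun hc => h.1.ne (congrArg V (Fin.ext hc))
  by_contra hc
  have hs1 : (s:ℕ)+1 < n := by have := t.isLt; omega
  refine h.2 (c := V ⟨(s:ℕ)+1, hs1⟩) ?_ ?_
  · exact KV.lt_mk (by show (s:ℕ) ≤ (s:ℕ)+1; omega) (by show (s:ℕ)+1 ≤ (s:ℕ) → False; omega)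
  · exact KV.lt_mk (by show (s:ℕ)+1 ≤ (t:ℕ); omega) (by show (t:ℕ) ≤ (s:ℕ)+1 → False; omega)

lemma cov_UU {s t : Fin n} (h : U s ⋖ U t) : (t:ℕ) = (s:ℕ) + 1 := by
  have h1 : (s:ℕ) ≤ t := h.1.le
  have hne : (s:ℕ) ≠ t := fun hc => h.1.ne (congrArg U (Fin.ext hc))
  by_contra hc
  have hs1 : (s:ℕ)+1 < n := by have := t.isLt; omega
  refine h.2 (c := U ⟨(s:ℕ)+1, hs1⟩) ?_ ?_
  · exact KV.lt_mk (by show (s:ℕ) ≤ (s:ℕ)+1; omega) (by show (s:ℕ)+1 ≤ (s:ℕ) → False; omega)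
  · exact KV.lt_mk (by show (s:ℕ)+1 ≤ (t:ℕ); omega) (by show (t:ℕ) ≤ (s:ℕ)+1 → False; omega)

lemma cov_AU {i t : Fin n} (h : A i ⋖ U t) : (t:ℕ) = (i:ℕ) + 1 := by
  have h1 : (i:ℕ) < t := h.1.le
  by_contra hc
  have hi1 : (i:ℕ)+1 < n := by have := t.isLt; omega
  refine h.2 (c := U ⟨(i:ℕ)+1, hi1⟩) ?_ ?_
  · exact KV.lt_mk (by show (i:ℕ) < (i:ℕ)+1; omega) (by show False → _; exact False.elim)
  · exact KV.lt_mk (by show (i:ℕ)+1 ≤ (t:ℕ); omega) (by show (t:ℕ) ≤ (i:ℕ)+1 → False; omega)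

lemma cov_AV {i m : Fin n} (h : A i ⋖ V m) : (m:ℕ) + (i:ℕ) = n := by
  have h1 : n ≤ (i:ℕ) + m := h.1.le
  by_contra hc
  have hm1 : (m:ℕ) - 1 < n := by have := m.isLt; omega
  have hmpos : 1 ≤ (m:ℕ) := by have := i.isLt; omega
  refine h.2 (c := V ⟨(m:ℕ)-1, hm1⟩) ?_ ?_
  · exact KV.lt_mk (by show n ≤ (i:ℕ) + ((m:ℕ)-1); omega) (by show False → _; exact False.elim)
  · exact KV.lt_mk (by show (m:ℕ)-1 ≤ (m:ℕ); omega) (by show (m:ℕ) ≤ (m:ℕ)-1 → False; omega)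

lemma cov_UB {t j : Fin n} (h : U t ⋖ B j) : (t:ℕ) = (j:ℕ) := by
  have h1 : (t:ℕ) ≤ j := h.1.le
  by_contra hc
  have ht1 : (t:ℕ)+1 < n := by have := j.isLt; omega
  refine h.2 (c := U ⟨(t:ℕ)+1, ht1⟩) ?_ ?_
  · exact KV.lt_mk (by show (t:ℕ) ≤ (t:ℕ)+1; omega) (by show (t:ℕ)+1 ≤ (t:ℕ) → False; omega)
  · exact KV.lt_mk (by show (t:ℕ)+1 ≤ (j:ℕ); omega) (by show False → _; exact False.elim)

lemma cov_VB {m j : Fin n} (h : V m ⋖ B j) : (m:ℕ) + (j:ℕ) + 1 = n := by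
  have h1 : (m:ℕ) + j < n := h.1.le
  by_contra hc
  have hm1 : (m:ℕ)+1 < n := by omega
  refine h.2 (c := V ⟨(m:ℕ)+1, hm1⟩) ?_ ?_
  · exact KV.lt_mk (by show (m:ℕ) ≤ (m:ℕ)+1; omega) (by show (m:ℕ)+1 ≤ (m:ℕ) → False; omega)
  · exact KV.lt_mk (by show (m:ℕ)+1 + (j:ℕ) < n; omega) (by show False → _; exact False.elim)

/-! the arcs -/

noncomputable def arc : ∀ ⦃x y : KV n⦄, x ⋖ y → Path (pos x) (pos y) := fun x y h =>
  match x, y, h with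
  | A i, A _, h => (not_cov_AA h).elim
  | A i, U t, _ => hookPath (pos (A i))
      ((n:ℝ)+4+(i:ℕ), 2*(n:ℝ)-2-2*(i:ℕ)) ((n:ℝ)+4+(i:ℕ), 2*(n:ℝ)+2*(i:ℕ)+1) (pos (U t))
  | A i, V m, _ => segPath (pos (A i)) (pos (V m))
  | A i, B j, h => (not_cov_AB h).elim
  | U s, A j, h => (False.elim h.1.le)
  | U s, U t, _ => segPath (pos (U s)) (pos (U t))
  | U s, V t, h => (False.elim h.1.le)
  | U t, B j, _ => hookPath (pos (U t))
      (2+(j:ℕ), 2*(n:ℝ)+2*(j:ℕ)+1) (2+(j:ℕ), 5*(n:ℝ)+2*(j:ℕ)-1) (pos (B j))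
  | V s, A j, h => (False.elim h.1.le)
  | V s, U t, h => (False.elim h.1.le)
  | V s, V t, _ => segPath (pos (V s)) (pos (V t))
  | V m, B j, _ => segPath (pos (V m)) (pos (B j))
  | B i, A j, h => (False.elim h.1.le)
  | B i, U t, h => (False.elim h.1.le)
  | B i, V t, h => (False.elim h.1.le)
  | B i, B j, h => (not_cov_BB h).elim

lemma arc_strict : ∀ ⦃x y : KV n⦄ (h : x ⋖ y),
    StrictMono (fun t : unitInterval => ((arc h) t).2) := by
  intro x y h
  rcases x with i|i|i|i <;> rcases y with j|j|j|j
  case A.A => exact (not_cov_AA h).elim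
  case A.U =>
    have hij : (i:ℕ) < (j:ℕ) := h.1.le
    refine hookPath_strict ?_ ?_ ?_
    · show (pos (A i)).2 < _
      simp only [pos]
      norm_num
    · show _ < _
      have : (0:ℝ) ≤ ((i:ℕ):ℝ) := Nat.cast_nonneg _
      norm_num
      linarith
    · show _ < (pos (U j)).2
      simp only [pos]
      have : ((i:ℕ):ℝ) + 1 ≤ ((j:ℕ):ℝ) := by exact_mod_cast hij
      linarith
  case A.V =>
    have hij : n ≤ (i:ℕ) + (j:ℕ) := h.1.le
    refine segPath_strict ?_
    simp only [pos]
    have : ((n:ℕ):ℝ) ≤ ((i:ℕ):ℝ) + ((j:ℕ):ℝ) := by exact_mod_cast hij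
    linarith
  case A.B => exact (not_cov_AB h).elim
  case U.A => exact (False.elim h.1.le)
  case U.U =>
    have hij : (i:ℕ) ≤ (j:ℕ) := h.1.le
    have hne : (i:ℕ) ≠ (j:ℕ) := fun hc => h.1.ne (congrArg U (Fin.ext hc))
    refine segPath_strict ?_
    simp only [pos]
    have : ((i:ℕ):ℝ) + 1 ≤ ((j:ℕ):ℝ) := by exact_mod_cast (by omega : (i:ℕ)+1 ≤ j)
    linarith
  case U.V => exact (False.elim h.1.le)
  case U.B =>
    have hij : (i:ℕ) ≤ (j:ℕ) := h.1.le
    have hjn : (j:ℕ) < n := j.isLt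
    have c1 : ((i:ℕ):ℝ) ≤ ((j:ℕ):ℝ) := by exact_mod_cast hij
    have c2 : ((j:ℕ):ℝ) + 1 ≤ ((n:ℕ):ℝ) := by exact_mod_cast hjn
    refine hookPath_strict ?_ ?_ ?_
    · show (pos (U i)).2 < _
      simp only [pos]
      linarith
    · show _ < _
      norm_num
      linarith
    · show _ < (pos (B j)).2
      simp only [pos]
      linarith
  case V.A => exact (False.elim h.1.le)
  case V.U => exact (False.elim h.1.le)
  case V.V =>
    have hij : (i:ℕ) ≤ (j:ℕ) := h.1.le
    have hne : (i:ℕ) ≠ (j:ℕ) := fun hc => h.1.ne (congrArg V (Fin.ext hc))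
    refine segPath_strict ?_
    simp only [pos]
    have : ((i:ℕ):ℝ) + 1 ≤ ((j:ℕ):ℝ) := by exact_mod_cast (by omega : (i:ℕ)+1 ≤ j)
    linarith
  case V.B =>
    have hin : (i:ℕ) < n := i.isLt
    have c1 : ((i:ℕ):ℝ) + 1 ≤ ((n:ℕ):ℝ) := by exact_mod_cast hin
    have hj : (0:ℝ) ≤ ((j:ℕ):ℝ) := Nat.cast_nonneg _
    refine segPath_strict ?_
    simp only [pos]
    linarith
  case B.A => exact (False.elim h.1.le)
  case B.U => exact (False.elim h.1.le)
  case B.V => exact (False.elim h.1.le)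
  case B.B => exact (not_cov_BB h).elim

lemma arc_inj : ∀ ⦃x y : KV n⦄ (h : x ⋖ y), Function.Injective (arc h) := by
  intro x y h s t hst
  exact (arc_strict h).injective (congrArg Prod.snd hst)

/-! ### grouped bounds for hooks -/

lemma hook3_le {q0 q1 q2 q3 z : ℝ × ℝ}
    (hz : z ∈ segment ℝ q0 q1 ∪ segment ℝ q1 q2 ∪ segment ℝ q2 q3)
    (a b C : ℝ) (h0 : a*q0.1+b*q0.2 ≤ C) (h1 : a*q1.1+b*q1.2 ≤ C)
    (h2 : a*q2.1+b*q2.2 ≤ C) (h3 : a*q3.1+b*q3.2 ≤ C) : a*z.1+b*z.2 ≤ C := by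
  rcases hz with (h|h)|h
  exacts [seg_le h a b C h0 h1, seg_le h a b C h1 h2, seg_le h a b C h2 h3]

lemma hook3_ge {q0 q1 q2 q3 z : ℝ × ℝ}
    (hz : z ∈ segment ℝ q0 q1 ∪ segment ℝ q1 q2 ∪ segment ℝ q2 q3)
    (a b C : ℝ) (h0 : C ≤ a*q0.1+b*q0.2) (h1 : C ≤ a*q1.1+b*q1.2)
    (h2 : C ≤ a*q2.1+b*q2.2) (h3 : C ≤ a*q3.1+b*q3.2) : C ≤ a*z.1+b*z.2 := by
  rcases hz with (h|h)|h
  exacts [seg_ge h a b C h0 h1, seg_ge h a b C h1 h2, seg_ge h a b C h2 h3]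

/-! ### pairwise disjointness: pair lemmas.
`z` is a common point of two arcs; conclusions give the only allowed locations. -/

section Pairs

variable {n : ℕ} {z : ℝ × ℝ}

-- v-rail vs v-rail
lemma pair_RR {t t' : ℕ} (hne : t ≠ t')
    (m1 : z ∈ segment ℝ ((0:ℝ), 2*(t:ℝ)) (0, 2*(t:ℝ)+2))
    (m2 : z ∈ segment ℝ ((0:ℝ), 2*(t':ℝ)) (0, 2*(t':ℝ)+2)) :
    z ∈ ({((0:ℝ), 2*(t:ℝ)), (0, 2*(t:ℝ)+2)} ∩ {((0:ℝ), 2*(t':ℝ)), (0, 2*(t':ℝ)+2)} :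
      Set (ℝ × ℝ)) := by
  have b1 := seg_le m1 0 1 (2*(t:ℝ)+2) (by norm_num) (by norm_num)
  have b2 := seg_ge m1 0 1 (2*(t:ℝ)) (by norm_num) (by norm_num)
  have b3 := seg_le m2 0 1 (2*(t':ℝ)+2) (by norm_num) (by norm_num)
  have b4 := seg_ge m2 0 1 (2*(t':ℝ)) (by norm_num) (by norm_num)
  simp only [Set.mem_inter_iff, Set.mem_insert_iff, Set.mem_singleton_iff]
  rcases Nat.lt_or_ge t t' with hlt | hge
  · have ht1 : t' = t + 1 := by
      have : 2*(t':ℝ) ≤ 2*(t:ℝ)+2 := by linarith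
      have : 2*t' ≤ 2*t+2 := by exact_mod_cast this
      omega
    subst ht1
    have hz2 : (0:ℝ)*z.1 + 1*z.2 = 2*(t:ℝ)+2 := by push_cast at b4 ⊢; linarith
    have e1 := seg_eq_right m1 0 1 (2*(t:ℝ)+2) (by norm_num) (by norm_num) hz2
    refine ⟨Or.inr e1, Or.inl ?_⟩
    rw [e1]; congr 1 <;> push_cast <;> ring
  · have hlt : t' < t := by omega
    have ht1 : t = t' + 1 := by
      have : 2*(t:ℝ) ≤ 2*(t':ℝ)+2 := by linarith
      have : 2*t ≤ 2*t'+2 := by exact_mod_cast this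
      omega
    subst ht1
    have hz2 : (0:ℝ)*z.1 + 1*z.2 = 2*(t':ℝ)+2 := by push_cast at b2 ⊢; linarith
    have e1 := seg_eq_right m2 0 1 (2*(t':ℝ)+2) (by norm_num) (by norm_num) hz2
    refine ⟨Or.inl ?_, Or.inr e1⟩
    rw [e1]; congr 1 <;> push_cast <;> ring

-- v-rail vs u-rail
lemma pair_RS {t t' : ℕ}
    (m1 : z ∈ segment ℝ ((0:ℝ), 2*(t:ℝ)) (0, 2*(t:ℝ)+2))
    (m2 : z ∈ segment ℝ ((n:ℝ)+3, 2*(n:ℝ)+2*(t':ℝ)) ((n:ℝ)+3, 2*(n:ℝ)+2*(t':ℝ)+2)) :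
    False := by
  have hn : (0:ℝ) ≤ (n:ℝ) := Nat.cast_nonneg n
  have b1 := seg_le m1 1 0 0 (by norm_num) (by norm_num)
  have b2 := seg_ge m2 1 0 ((n:ℝ)+3) (by norm_num) (by norm_num)
  linarith

-- v-rail vs fan
lemma pair_RF {t i : ℕ} (hi : i < n)
    (m1 : z ∈ segment ℝ ((0:ℝ), 2*(t:ℝ)) (0, 2*(t:ℝ)+2))
    (m2 : z ∈ segment ℝ ((1:ℝ), 2*(n:ℝ)-3-2*(i:ℝ)) ((0:ℝ), 2*(n:ℝ)-2*(i:ℝ))) :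
    z ∈ ({((0:ℝ), 2*(t:ℝ)), (0, 2*(t:ℝ)+2)} ∩
      {((1:ℝ), 2*(n:ℝ)-3-2*(i:ℝ)), ((0:ℝ), 2*(n:ℝ)-2*(i:ℝ))} : Set (ℝ × ℝ)) := by
  have b1 := seg_le m1 1 0 0 (by norm_num) (by norm_num)
  have b2 := seg_ge m2 1 0 0 (by norm_num) (by norm_num)
  have hz1 : (-1:ℝ)*z.1 + 0*z.2 = 0 := by linarith
  have e1 := seg_eq_right m2 (-1) 0 0 (by norm_num) (by norm_num) hz1
  have b3 := seg_le m1 0 1 (2*(t:ℝ)+2) (by norm_num) (by norm_num)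
  have b4 := seg_ge m1 0 1 (2*(t:ℝ)) (by norm_num) (by norm_num)
  have hy : z.2 = 2*(n:ℝ)-2*(i:ℝ) := by rw [e1]
  have c1 : 2*t ≤ 2*n - 2*i := by
    have : 2*(t:ℝ) + 2*(i:ℝ) ≤ 2*(n:ℝ) := by linarith
    have : 2*t + 2*i ≤ 2*n := by exact_mod_cast this
    omega
  have c2 : 2*n - 2*i ≤ 2*t+2 := by
    have : 2*(n:ℝ) ≤ 2*(t:ℝ)+2+2*(i:ℝ) := by linarith
    have : 2*n ≤ 2*t+2+2*i := by exact_mod_cast this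
    omega
  simp only [Set.mem_inter_iff, Set.mem_insert_iff, Set.mem_singleton_iff]
  refine ⟨?_, Or.inr e1⟩
  have : n - i = t ∨ n - i = t + 1 := by omega
  rcases this with hc | hc
  · left
    rw [e1]
    have : 2*(n:ℝ)-2*(i:ℝ) = 2*(t:ℝ) := by
      have hni : (n:ℝ) - (i:ℝ) = (t:ℝ) := by
        have : ((n - i : ℕ):ℝ) = (t:ℝ) := by exact_mod_cast congrArg (Nat.cast (R := ℝ)) hc
        rw [Nat.cast_sub (by omega)] at this
        linarith
      linarith
    rw [this]
  · right
    rw [e1]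
    have : 2*(n:ℝ)-2*(i:ℝ) = 2*(t:ℝ)+2 := by
      have hni : (n:ℝ) - (i:ℝ) = (t:ℝ)+1 := by
        have : ((n - i : ℕ):ℝ) = ((t+1:ℕ):ℝ) := by exact_mod_cast congrArg (Nat.cast (R := ℝ)) hc
        rw [Nat.cast_sub (by omega)] at this
        push_cast at this
        linarith
      linarith
    rw [this]

-- v-rail vs v→b edge
lemma pair_RE {t j : ℕ} (hj : j < n)
    (m1 : z ∈ segment ℝ ((0:ℝ), 2*(t:ℝ)) (0, 2*(t:ℝ)+2))
    (m2 : z ∈ segment ℝ ((0:ℝ), 2*(n:ℝ)-2-2*(j:ℝ))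
      (-(3*(n:ℝ)+2+4*(j:ℝ)), 5*(n:ℝ)+2*(j:ℝ))) :
    z ∈ ({((0:ℝ), 2*(t:ℝ)), (0, 2*(t:ℝ)+2)} ∩
      {((0:ℝ), 2*(n:ℝ)-2-2*(j:ℝ)), (-(3*(n:ℝ)+2+4*(j:ℝ)), 5*(n:ℝ)+2*(j:ℝ))} :
        Set (ℝ × ℝ)) := by
  have hn : (0:ℝ) ≤ (n:ℝ) := Nat.cast_nonneg n
  have hjr : (0:ℝ) ≤ (j:ℝ) := Nat.cast_nonneg j
  have b1 := seg_le m1 1 0 0 (by norm_num) (by norm_num)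
  have b2 := seg_ge m1 1 0 0 (by norm_num) (by norm_num)
  have hz1 : (1:ℝ)*z.1 + 0*z.2 = 0 := by linarith
  have e1 := seg_eq_left m2 1 0 0 (by norm_num) (by norm_num; linarith) hz1
  have b3 := seg_le m1 0 1 (2*(t:ℝ)+2) (by norm_num) (by norm_num)
  have b4 := seg_ge m1 0 1 (2*(t:ℝ)) (by norm_num) (by norm_num)
  have hy : z.2 = 2*(n:ℝ)-2-2*(j:ℝ) := by rw [e1]
  have c1 : 2*t ≤ 2*n - 2 - 2*j := by
    have : 2*(t:ℝ) + 2 + 2*(j:ℝ) ≤ 2*(n:ℝ) := by linarith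
    have : 2*t + 2 + 2*j ≤ 2*n := by exact_mod_cast this
    omega
  have c2 : 2*n - 2 - 2*j ≤ 2*t+2 := by
    have : 2*(n:ℝ) ≤ 2*(t:ℝ)+4+2*(j:ℝ) := by linarith
    have : 2*n ≤ 2*t+4+2*j := by exact_mod_cast this
    omega
  simp only [Set.mem_inter_iff, Set.mem_insert_iff, Set.mem_singleton_iff]
  refine ⟨?_, Or.inl e1⟩
  have : n = t + j + 1 ∨ n = t + j + 2 := by omega
  rcases this with hc | hc
  · left
    rw [e1]
    have hnr : (n:ℝ) = (t:ℝ) + (j:ℝ) + 1 := by exact_mod_cast congrArg (Nat.cast (R := ℝ)) hc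
    have : 2*(n:ℝ)-2-2*(j:ℝ) = 2*(t:ℝ) := by linarith
    rw [this]
  · right
    rw [e1]
    have hnr : (n:ℝ) = (t:ℝ) + (j:ℝ) + 2 := by exact_mod_cast congrArg (Nat.cast (R := ℝ)) hc
    have : 2*(n:ℝ)-2-2*(j:ℝ) = 2*(t:ℝ)+2 := by linarith
    rw [this]

-- v-rail vs a→u hook
lemma pair_RG {t i : ℕ}
    (m1 : z ∈ segment ℝ ((0:ℝ), 2*(t:ℝ)) (0, 2*(t:ℝ)+2))
    (m2 : z ∈ segment ℝ ((1:ℝ), 2*(n:ℝ)-3-2*(i:ℝ)) ((n:ℝ)+4+(i:ℝ), 2*(n:ℝ)-2-2*(i:ℝ)) ∪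
      segment ℝ ((n:ℝ)+4+(i:ℝ), 2*(n:ℝ)-2-2*(i:ℝ)) ((n:ℝ)+4+(i:ℝ), 2*(n:ℝ)+2*(i:ℝ)+1) ∪
      segment ℝ ((n:ℝ)+4+(i:ℝ), 2*(n:ℝ)+2*(i:ℝ)+1) ((n:ℝ)+3, 2*(n:ℝ)+2*(i:ℝ)+2)) :
    False := by
  have hn : (0:ℝ) ≤ (n:ℝ) := Nat.cast_nonneg n
  have hir : (0:ℝ) ≤ (i:ℝ) := Nat.cast_nonneg i
  have b1 := seg_le m1 1 0 0 (by norm_num) (by norm_num)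
  have b2 := hook3_ge m2 1 0 1 (by norm_num) (by norm_num; linarith) (by norm_num; linarith)
    (by norm_num; linarith)
  linarith

-- v-rail vs u→b hook
lemma pair_RH {t j : ℕ} (ht : t + 1 < n) (hj : j < n)
    (m1 : z ∈ segment ℝ ((0:ℝ), 2*(t:ℝ)) (0, 2*(t:ℝ)+2))
    (m2 : z ∈ segment ℝ ((n:ℝ)+3, 2*(n:ℝ)+2*(j:ℝ)) (2+(j:ℝ), 2*(n:ℝ)+2*(j:ℝ)+1) ∪
      segment ℝ (2+(j:ℝ), 2*(n:ℝ)+2*(j:ℝ)+1) (2+(j:ℝ), 5*(n:ℝ)+2*(j:ℝ)-1) ∪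
      segment ℝ (2+(j:ℝ), 5*(n:ℝ)+2*(j:ℝ)-1) (-(3*(n:ℝ)+2+4*(j:ℝ)), 5*(n:ℝ)+2*(j:ℝ))) :
    False := by
  have hn1 : (1:ℝ) ≤ (n:ℝ) := by exact_mod_cast (by omega : 1 ≤ n)
  have ht' : (t:ℝ)+2 ≤ (n:ℝ) := by exact_mod_cast (by omega : t+2 ≤ n)
  have hjr : (0:ℝ) ≤ (j:ℝ) := Nat.cast_nonneg j
  have b1 := seg_le m1 0 1 (2*(t:ℝ)+2) (by norm_num) (by norm_num)
  have b2 := hook3_ge m2 0 1 (2*(n:ℝ)+2*(j:ℝ)) (by norm_num) (by norm_num <;> linarith)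
    (by norm_num <;> linarith) (by norm_num <;> linarith)
  linarith

-- fan vs fan
lemma pair_FF {i i' : ℕ} (hne : i ≠ i')
    (m1 : z ∈ segment ℝ ((1:ℝ), 2*(n:ℝ)-3-2*(i:ℝ)) ((0:ℝ), 2*(n:ℝ)-2*(i:ℝ)))
    (m2 : z ∈ segment ℝ ((1:ℝ), 2*(n:ℝ)-3-2*(i':ℝ)) ((0:ℝ), 2*(n:ℝ)-2*(i':ℝ))) :
    False := by
  have b1 := seg_le m1 3 1 (2*(n:ℝ)-2*(i:ℝ)) (by norm_num <;> linarith) (by norm_num <;> linarith)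
  have b2 := seg_ge m1 3 1 (2*(n:ℝ)-2*(i:ℝ)) (by norm_num <;> linarith) (by norm_num <;> linarith)
  have b3 := seg_le m2 3 1 (2*(n:ℝ)-2*(i':ℝ)) (by norm_num <;> linarith) (by norm_num <;> linarith)
  have b4 := seg_ge m2 3 1 (2*(n:ℝ)-2*(i':ℝ)) (by norm_num <;> linarith) (by norm_num <;> linarith)
  have : (i:ℝ) = (i':ℝ) := by linarith
  exact hne (by exact_mod_cast this)

-- fan vs v→b edge
lemma pair_FE {i j : ℕ}
    (m1 : z ∈ segment ℝ ((1:ℝ), 2*(n:ℝ)-3-2*(i:ℝ)) ((0:ℝ), 2*(n:ℝ)-2*(i:ℝ)))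
    (m2 : z ∈ segment ℝ ((0:ℝ), 2*(n:ℝ)-2-2*(j:ℝ))
      (-(3*(n:ℝ)+2+4*(j:ℝ)), 5*(n:ℝ)+2*(j:ℝ))) :
    z ∈ ({((1:ℝ), 2*(n:ℝ)-3-2*(i:ℝ)), ((0:ℝ), 2*(n:ℝ)-2*(i:ℝ))} ∩
      {((0:ℝ), 2*(n:ℝ)-2-2*(j:ℝ)), (-(3*(n:ℝ)+2+4*(j:ℝ)), 5*(n:ℝ)+2*(j:ℝ))} :
        Set (ℝ × ℝ)) := by
  have hn : (0:ℝ) ≤ (n:ℝ) := Nat.cast_nonneg n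
  have hjr : (0:ℝ) ≤ (j:ℝ) := Nat.cast_nonneg j
  have b1 := seg_ge m1 1 0 0 (by norm_num) (by norm_num)
  have b2 := seg_le m2 1 0 0 (by norm_num) (by norm_num <;> linarith)
  have hz1 : (-1:ℝ)*z.1 + 0*z.2 = 0 := by linarith
  have e1 := seg_eq_right m1 (-1) 0 0 (by norm_num) (by norm_num) hz1
  have hz2 : (1:ℝ)*z.1 + 0*z.2 = 0 := by linarith
  have e2 := seg_eq_left m2 1 0 0 (by norm_num) (by norm_num <;> linarith) hz2
  simp only [Set.mem_inter_iff, Set.mem_insert_iff, Set.mem_singleton_iff]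
  exact ⟨Or.inr e1, Or.inl e2⟩

-- fan vs u-rail
lemma pair_FS {i t : ℕ}
    (m1 : z ∈ segment ℝ ((1:ℝ), 2*(n:ℝ)-3-2*(i:ℝ)) ((0:ℝ), 2*(n:ℝ)-2*(i:ℝ)))
    (m2 : z ∈ segment ℝ ((n:ℝ)+3, 2*(n:ℝ)+2*(t:ℝ)) ((n:ℝ)+3, 2*(n:ℝ)+2*(t:ℝ)+2)) :
    False := by
  have hn : (0:ℝ) ≤ (n:ℝ) := Nat.cast_nonneg n
  have b1 := seg_le m1 1 0 1 (by norm_num) (by norm_num)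
  have b2 := seg_ge m2 1 0 ((n:ℝ)+3) (by norm_num) (by norm_num)
  linarith

-- fan vs a→u hook
lemma pair_FG {i i' : ℕ}
    (m1 : z ∈ segment ℝ ((1:ℝ), 2*(n:ℝ)-3-2*(i:ℝ)) ((0:ℝ), 2*(n:ℝ)-2*(i:ℝ)))
    (m2 : z ∈ segment ℝ ((1:ℝ), 2*(n:ℝ)-3-2*(i':ℝ)) ((n:ℝ)+4+(i':ℝ), 2*(n:ℝ)-2-2*(i':ℝ)) ∪
      segment ℝ ((n:ℝ)+4+(i':ℝ), 2*(n:ℝ)-2-2*(i':ℝ)) ((n:ℝ)+4+(i':ℝ), 2*(n:ℝ)+2*(i':ℝ)+1) ∪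
      segment ℝ ((n:ℝ)+4+(i':ℝ), 2*(n:ℝ)+2*(i':ℝ)+1) ((n:ℝ)+3, 2*(n:ℝ)+2*(i':ℝ)+2)) :
    z ∈ ({((1:ℝ), 2*(n:ℝ)-3-2*(i:ℝ)), ((0:ℝ), 2*(n:ℝ)-2*(i:ℝ))} ∩
      {((1:ℝ), 2*(n:ℝ)-3-2*(i':ℝ)), ((n:ℝ)+3, 2*(n:ℝ)+2*(i':ℝ)+2)} : Set (ℝ × ℝ)) := by
  have hn : (0:ℝ) ≤ (n:ℝ) := Nat.cast_nonneg n
  have hir : (0:ℝ) ≤ (i':ℝ) := Nat.cast_nonneg i'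
  have b1 := seg_le m1 1 0 1 (by norm_num) (by norm_num)
  have b2 := hook3_ge m2 1 0 1 (by norm_num) (by norm_num <;> linarith)
    (by norm_num <;> linarith) (by norm_num <;> linarith)
  have hz1 : (1:ℝ)*z.1 + 0*z.2 = 1 := by linarith
  have e1 := seg_eq_left m1 1 0 1 (by norm_num) (by norm_num) hz1
  -- now z is the start of the fan; it must lie on the first piece of the hook
  have e2 : z = ((1:ℝ), 2*(n:ℝ)-3-2*(i':ℝ)) := by
    rcases m2 with (p|p)|p
    · exact seg_eq_left p (-1) 0 (-1) (by norm_num) (by norm_num <;> linarith) (by rw [e1]; norm_num)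
    · exfalso
      have := seg_ge p 1 0 ((n:ℝ)+4) (by norm_num <;> linarith) (by norm_num <;> linarith)
      rw [e1] at this
      norm_num at this
      linarith
    · exfalso
      have := seg_ge p 1 0 ((n:ℝ)+3) (by norm_num <;> linarith) (by norm_num)
      rw [e1] at this
      norm_num at this
      linarith
  simp only [Set.mem_inter_iff, Set.mem_insert_iff, Set.mem_singleton_iff]
  exact ⟨Or.inl e1, Or.inl e2⟩

-- v→b vs u-rail
lemma pair_ES {j t : ℕ}
    (m1 : z ∈ segment ℝ ((0:ℝ), 2*(n:ℝ)-2-2*(j:ℝ))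
      (-(3*(n:ℝ)+2+4*(j:ℝ)), 5*(n:ℝ)+2*(j:ℝ)))
    (m2 : z ∈ segment ℝ ((n:ℝ)+3, 2*(n:ℝ)+2*(t:ℝ)) ((n:ℝ)+3, 2*(n:ℝ)+2*(t:ℝ)+2)) :
    False := by
  have hn : (0:ℝ) ≤ (n:ℝ) := Nat.cast_nonneg n
  have hjr : (0:ℝ) ≤ (j:ℝ) := Nat.cast_nonneg j
  have b1 := seg_le m1 1 0 0 (by norm_num) (by norm_num <;> linarith)
  have b2 := seg_ge m2 1 0 ((n:ℝ)+3) (by norm_num) (by norm_num)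
  linarith

-- v→b vs v→b
lemma pair_EE {j j' : ℕ} (hne : j ≠ j')
    (m1 : z ∈ segment ℝ ((0:ℝ), 2*(n:ℝ)-2-2*(j:ℝ))
      (-(3*(n:ℝ)+2+4*(j:ℝ)), 5*(n:ℝ)+2*(j:ℝ)))
    (m2 : z ∈ segment ℝ ((0:ℝ), 2*(n:ℝ)-2-2*(j':ℝ))
      (-(3*(n:ℝ)+2+4*(j':ℝ)), 5*(n:ℝ)+2*(j':ℝ))) :
    False := by
  have b1 := seg_le m1 1 1 (2*(n:ℝ)-2-2*(j:ℝ)) (by norm_num) (by norm_num <;> linarith)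
  have b2 := seg_ge m1 1 1 (2*(n:ℝ)-2-2*(j:ℝ)) (by norm_num) (by norm_num <;> linarith)
  have b3 := seg_le m2 1 1 (2*(n:ℝ)-2-2*(j':ℝ)) (by norm_num) (by norm_num <;> linarith)
  have b4 := seg_ge m2 1 1 (2*(n:ℝ)-2-2*(j':ℝ)) (by norm_num) (by norm_num <;> linarith)
  have : (j:ℝ) = (j':ℝ) := by linarith
  exact hne (by exact_mod_cast this)

-- v→b vs a→u hook
lemma pair_EG {j i : ℕ}
    (m1 : z ∈ segment ℝ ((0:ℝ), 2*(n:ℝ)-2-2*(j:ℝ))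
      (-(3*(n:ℝ)+2+4*(j:ℝ)), 5*(n:ℝ)+2*(j:ℝ)))
    (m2 : z ∈ segment ℝ ((1:ℝ), 2*(n:ℝ)-3-2*(i:ℝ)) ((n:ℝ)+4+(i:ℝ), 2*(n:ℝ)-2-2*(i:ℝ)) ∪
      segment ℝ ((n:ℝ)+4+(i:ℝ), 2*(n:ℝ)-2-2*(i:ℝ)) ((n:ℝ)+4+(i:ℝ), 2*(n:ℝ)+2*(i:ℝ)+1) ∪
      segment ℝ ((n:ℝ)+4+(i:ℝ), 2*(n:ℝ)+2*(i:ℝ)+1) ((n:ℝ)+3, 2*(n:ℝ)+2*(i:ℝ)+2)) :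
    False := by
  have hn : (0:ℝ) ≤ (n:ℝ) := Nat.cast_nonneg n
  have hir : (0:ℝ) ≤ (i:ℝ) := Nat.cast_nonneg i
  have hjr : (0:ℝ) ≤ (j:ℝ) := Nat.cast_nonneg j
  have b1 := seg_le m1 1 0 0 (by norm_num) (by norm_num <;> linarith)
  have b2 := hook3_ge m2 1 0 1 (by norm_num) (by norm_num <;> linarith)
    (by norm_num <;> linarith) (by norm_num <;> linarith)
  linarith

-- u-rail vs u-rail
lemma pair_SS {t t' : ℕ} (hne : t ≠ t')
    (m1 : z ∈ segment ℝ ((n:ℝ)+3, 2*(n:ℝ)+2*(t:ℝ)) ((n:ℝ)+3, 2*(n:ℝ)+2*(t:ℝ)+2))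
    (m2 : z ∈ segment ℝ ((n:ℝ)+3, 2*(n:ℝ)+2*(t':ℝ)) ((n:ℝ)+3, 2*(n:ℝ)+2*(t':ℝ)+2)) :
    z ∈ ({((n:ℝ)+3, 2*(n:ℝ)+2*(t:ℝ)), ((n:ℝ)+3, 2*(n:ℝ)+2*(t:ℝ)+2)} ∩
      {((n:ℝ)+3, 2*(n:ℝ)+2*(t':ℝ)), ((n:ℝ)+3, 2*(n:ℝ)+2*(t':ℝ)+2)} : Set (ℝ × ℝ)) := by
  have b1 := seg_le m1 0 1 (2*(n:ℝ)+2*(t:ℝ)+2) (by norm_num) (by norm_num)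
  have b2 := seg_ge m1 0 1 (2*(n:ℝ)+2*(t:ℝ)) (by norm_num) (by norm_num)
  have b3 := seg_le m2 0 1 (2*(n:ℝ)+2*(t':ℝ)+2) (by norm_num) (by norm_num)
  have b4 := seg_ge m2 0 1 (2*(n:ℝ)+2*(t':ℝ)) (by norm_num) (by norm_num)
  simp only [Set.mem_inter_iff, Set.mem_insert_iff, Set.mem_singleton_iff]
  rcases Nat.lt_or_ge t t' with hlt | hge
  · have ht1 : t' = t + 1 := by
      have : 2*(t':ℝ) ≤ 2*(t:ℝ)+2 := by linarith
      have : 2*t' ≤ 2*t+2 := by exact_mod_cast this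
      omega
    subst ht1
    have hz2 : (0:ℝ)*z.1 + 1*z.2 = 2*(n:ℝ)+2*(t:ℝ)+2 := by push_cast at b4 ⊢; linarith
    have e1 := seg_eq_right m1 0 1 (2*(n:ℝ)+2*(t:ℝ)+2) (by norm_num) (by norm_num) hz2
    refine ⟨Or.inr e1, Or.inl ?_⟩
    rw [e1]; congr 1 <;> push_cast <;> ring
  · have hlt : t' < t := by omega
    have ht1 : t = t' + 1 := by
      have : 2*(t:ℝ) ≤ 2*(t':ℝ)+2 := by linarith
      have : 2*t ≤ 2*t'+2 := by exact_mod_cast this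
      omega
    subst ht1
    have hz2 : (0:ℝ)*z.1 + 1*z.2 = 2*(n:ℝ)+2*(t':ℝ)+2 := by push_cast at b2 ⊢; linarith
    have e1 := seg_eq_right m2 0 1 (2*(n:ℝ)+2*(t':ℝ)+2) (by norm_num) (by norm_num) hz2
    refine ⟨Or.inl ?_, Or.inr e1⟩
    rw [e1]; congr 1 <;> push_cast <;> ring

-- v→b vs u→b hook
lemma pair_EH {j j' : ℕ} (hj : j < n) (hj' : j' < n)
    (m1 : z ∈ segment ℝ ((0:ℝ), 2*(n:ℝ)-2-2*(j:ℝ))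
      (-(3*(n:ℝ)+2+4*(j:ℝ)), 5*(n:ℝ)+2*(j:ℝ)))
    (m2 : z ∈ segment ℝ ((n:ℝ)+3, 2*(n:ℝ)+2*(j':ℝ)) (2+(j':ℝ), 2*(n:ℝ)+2*(j':ℝ)+1) ∪
      segment ℝ (2+(j':ℝ), 2*(n:ℝ)+2*(j':ℝ)+1) (2+(j':ℝ), 5*(n:ℝ)+2*(j':ℝ)-1) ∪
      segment ℝ (2+(j':ℝ), 5*(n:ℝ)+2*(j':ℝ)-1) (-(3*(n:ℝ)+2+4*(j':ℝ)), 5*(n:ℝ)+2*(j':ℝ))) :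
    z ∈ ({((0:ℝ), 2*(n:ℝ)-2-2*(j:ℝ)), (-(3*(n:ℝ)+2+4*(j:ℝ)), 5*(n:ℝ)+2*(j:ℝ))} ∩
      {((n:ℝ)+3, 2*(n:ℝ)+2*(j':ℝ)), (-(3*(n:ℝ)+2+4*(j':ℝ)), 5*(n:ℝ)+2*(j':ℝ))} :
        Set (ℝ × ℝ)) := by
  have hn : (1:ℝ) ≤ (n:ℝ) := by exact_mod_cast (by omega : 1 ≤ n)
  have hjr : (0:ℝ) ≤ (j:ℝ) := Nat.cast_nonneg j
  have hjr' : (0:ℝ) ≤ (j':ℝ) := Nat.cast_nonneg j'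
  have bE_le := seg_le m1 1 0 0 (by norm_num) (by norm_num <;> linarith)
  rcases m2 with (p|p)|p
  · exfalso
    have := seg_ge p 1 0 2 (by norm_num <;> linarith) (by norm_num <;> linarith)
    linarith
  · exfalso
    have := seg_ge p 1 0 2 (by norm_num <;> linarith) (by norm_num <;> linarith)
    linarith
  · -- top approach piece of the hook
    rcases Nat.lt_trichotomy j j' with hlt | heq | hgt
    · exfalso
      have hA := seg_ge p 0 1 (5*(n:ℝ)+2*(j':ℝ)-1) (by norm_num) (by norm_num <;> linarith)
      have hE := seg_le m1 0 1 (5*(n:ℝ)+2*(j:ℝ)) (by norm_num <;> linarith) (by norm_num)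
      have hc : (j:ℝ)+1 ≤ (j':ℝ) := by exact_mod_cast (by omega : j+1 ≤ j')
      linarith
    · subst heq
      have hA_ge := seg_ge p 1 1 (2*(n:ℝ)-2-2*(j:ℝ)) (by norm_num <;> linarith)
        (by norm_num <;> linarith)
      have hE1 := seg_le m1 1 1 (2*(n:ℝ)-2-2*(j:ℝ)) (by norm_num) (by norm_num <;> linarith)
      have hzC : (-1:ℝ)*z.1 + (-1)*z.2 = -(2*(n:ℝ)-2-2*(j:ℝ)) := by linarith
      have e1 := seg_eq_right p (-1) (-1) (-(2*(n:ℝ)-2-2*(j:ℝ)))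
        (by norm_num <;> linarith) (by norm_num <;> linarith) hzC
      simp only [Set.mem_inter_iff, Set.mem_insert_iff, Set.mem_singleton_iff]
      exact ⟨Or.inr e1, Or.inr e1⟩
    · exfalso
      have hA := seg_ge p 1 1 (2*(n:ℝ)-2-2*(j':ℝ)) (by norm_num <;> linarith)
        (by norm_num <;> linarith)
      have hE1 := seg_le m1 1 1 (2*(n:ℝ)-2-2*(j:ℝ)) (by norm_num) (by norm_num <;> linarith)
      have hc : (j':ℝ)+1 ≤ (j:ℝ) := by exact_mod_cast (by omega : j'+1 ≤ j)
      linarith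

-- u-rail vs a→u hook
lemma pair_SG {t i : ℕ}
    (m1 : z ∈ segment ℝ ((n:ℝ)+3, 2*(n:ℝ)+2*(t:ℝ)) ((n:ℝ)+3, 2*(n:ℝ)+2*(t:ℝ)+2))
    (m2 : z ∈ segment ℝ ((1:ℝ), 2*(n:ℝ)-3-2*(i:ℝ)) ((n:ℝ)+4+(i:ℝ), 2*(n:ℝ)-2-2*(i:ℝ)) ∪
      segment ℝ ((n:ℝ)+4+(i:ℝ), 2*(n:ℝ)-2-2*(i:ℝ)) ((n:ℝ)+4+(i:ℝ), 2*(n:ℝ)+2*(i:ℝ)+1) ∪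
      segment ℝ ((n:ℝ)+4+(i:ℝ), 2*(n:ℝ)+2*(i:ℝ)+1) ((n:ℝ)+3, 2*(n:ℝ)+2*(i:ℝ)+2)) :
    z ∈ ({((n:ℝ)+3, 2*(n:ℝ)+2*(t:ℝ)), ((n:ℝ)+3, 2*(n:ℝ)+2*(t:ℝ)+2)} ∩
      {((1:ℝ), 2*(n:ℝ)-3-2*(i:ℝ)), ((n:ℝ)+3, 2*(n:ℝ)+2*(i:ℝ)+2)} : Set (ℝ × ℝ)) := by
  have hir : (0:ℝ) ≤ (i:ℝ) := Nat.cast_nonneg i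
  have htr : (0:ℝ) ≤ (t:ℝ) := Nat.cast_nonneg t
  have hSx_le := seg_le m1 1 0 ((n:ℝ)+3) (by norm_num) (by norm_num)
  have hSx_ge := seg_ge m1 1 0 ((n:ℝ)+3) (by norm_num) (by norm_num)
  have hSy_le := seg_le m1 0 1 (2*(n:ℝ)+2*(t:ℝ)+2) (by norm_num) (by norm_num)
  have hSy_ge := seg_ge m1 0 1 (2*(n:ℝ)+2*(t:ℝ)) (by norm_num) (by norm_num)
  rcases m2 with (p|p)|p
  · exfalso
    have := seg_le p 0 1 (2*(n:ℝ)-2-2*(i:ℝ)) (by norm_num <;> linarith) (by norm_num)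
    linarith
  · exfalso
    have := seg_ge p 1 0 ((n:ℝ)+4) (by norm_num <;> linarith) (by norm_num <;> linarith)
    linarith
  · have hzC : (-1:ℝ)*z.1 + 0*z.2 = -((n:ℝ)+3) := by linarith
    have e1 := seg_eq_right p (-1) 0 (-((n:ℝ)+3)) (by norm_num <;> linarith) (by norm_num) hzC
    have hy : z.2 = 2*(n:ℝ)+2*(i:ℝ)+2 := by rw [e1]
    have c1 : 2*t ≤ 2*i+2 := by
      have : 2*(t:ℝ) ≤ 2*(i:ℝ)+2 := by linarith
      exact_mod_cast this
    have c2 : 2*i+2 ≤ 2*t+2 := by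
      have : 2*(i:ℝ)+2 ≤ 2*(t:ℝ)+2 := by linarith
      exact_mod_cast this
    simp only [Set.mem_inter_iff, Set.mem_insert_iff, Set.mem_singleton_iff]
    refine ⟨?_, Or.inr e1⟩
    have : i + 1 = t ∨ i = t := by omega
    rcases this with hc | hc
    · left
      rw [e1]
      have : (i:ℝ) + 1 = (t:ℝ) := by exact_mod_cast congrArg (Nat.cast (R := ℝ)) hc
      congr 1
      linarith
    · right
      rw [e1]
      have : (i:ℝ) = (t:ℝ) := by exact_mod_cast congrArg (Nat.cast (R := ℝ)) hc
      congr 1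
      linarith

-- u-rail vs u→b hook
lemma pair_SH {t j : ℕ} (hj : j < n)
    (m1 : z ∈ segment ℝ ((n:ℝ)+3, 2*(n:ℝ)+2*(t:ℝ)) ((n:ℝ)+3, 2*(n:ℝ)+2*(t:ℝ)+2))
    (m2 : z ∈ segment ℝ ((n:ℝ)+3, 2*(n:ℝ)+2*(j:ℝ)) (2+(j:ℝ), 2*(n:ℝ)+2*(j:ℝ)+1) ∪
      segment ℝ (2+(j:ℝ), 2*(n:ℝ)+2*(j:ℝ)+1) (2+(j:ℝ), 5*(n:ℝ)+2*(j:ℝ)-1) ∪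
      segment ℝ (2+(j:ℝ), 5*(n:ℝ)+2*(j:ℝ)-1) (-(3*(n:ℝ)+2+4*(j:ℝ)), 5*(n:ℝ)+2*(j:ℝ))) :
    z ∈ ({((n:ℝ)+3, 2*(n:ℝ)+2*(t:ℝ)), ((n:ℝ)+3, 2*(n:ℝ)+2*(t:ℝ)+2)} ∩
      {((n:ℝ)+3, 2*(n:ℝ)+2*(j:ℝ)), (-(3*(n:ℝ)+2+4*(j:ℝ)), 5*(n:ℝ)+2*(j:ℝ))} :
        Set (ℝ × ℝ)) := by
  have hjn : (j:ℝ)+1 ≤ (n:ℝ) := by exact_mod_cast (by omega : j+1 ≤ n)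
  have hjr : (0:ℝ) ≤ (j:ℝ) := Nat.cast_nonneg j
  have hSx_le := seg_le m1 1 0 ((n:ℝ)+3) (by norm_num) (by norm_num)
  have hSx_ge := seg_ge m1 1 0 ((n:ℝ)+3) (by norm_num) (by norm_num)
  have hSy_le := seg_le m1 0 1 (2*(n:ℝ)+2*(t:ℝ)+2) (by norm_num) (by norm_num)
  have hSy_ge := seg_ge m1 0 1 (2*(n:ℝ)+2*(t:ℝ)) (by norm_num) (by norm_num)
  rcases m2 with (p|p)|p
  · have hzC : (1:ℝ)*z.1 + 0*z.2 = (n:ℝ)+3 := by linarith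
    have e1 := seg_eq_left p 1 0 ((n:ℝ)+3) (by norm_num) (by norm_num <;> linarith) hzC
    have hy : z.2 = 2*(n:ℝ)+2*(j:ℝ) := by rw [e1]
    have c1 : 2*t ≤ 2*j := by
      have : 2*(t:ℝ) ≤ 2*(j:ℝ) := by linarith
      exact_mod_cast this
    have c2 : 2*j ≤ 2*t+2 := by
      have : 2*(j:ℝ) ≤ 2*(t:ℝ)+2 := by linarith
      exact_mod_cast this
    simp only [Set.mem_inter_iff, Set.mem_insert_iff, Set.mem_singleton_iff]
    refine ⟨?_, Or.inl e1⟩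
    have : j = t ∨ j = t + 1 := by omega
    rcases this with hc | hc
    · left
      rw [e1]
      have : (j:ℝ) = (t:ℝ) := by exact_mod_cast congrArg (Nat.cast (R := ℝ)) hc
      congr 1
      linarith
    · right
      rw [e1]
      have : (j:ℝ) = (t:ℝ)+1 := by exact_mod_cast congrArg (Nat.cast (R := ℝ)) hc
      congr 1
      linarith
  · exfalso
    have := seg_le p 1 0 (2+(j:ℝ)) (by norm_num) (by norm_num)
    linarith
  · exfalso
    have := seg_le p 1 0 (2+(j:ℝ)) (by norm_num) (by norm_num <;> linarith)
    linarith

-- a→u hook vs a→u hook (i < i'): disjoint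
lemma pair_GG {i i' : ℕ} (hlt : i < i')
    (m1 : z ∈ segment ℝ ((1:ℝ), 2*(n:ℝ)-3-2*(i:ℝ)) ((n:ℝ)+4+(i:ℝ), 2*(n:ℝ)-2-2*(i:ℝ)) ∪
      segment ℝ ((n:ℝ)+4+(i:ℝ), 2*(n:ℝ)-2-2*(i:ℝ)) ((n:ℝ)+4+(i:ℝ), 2*(n:ℝ)+2*(i:ℝ)+1) ∪
      segment ℝ ((n:ℝ)+4+(i:ℝ), 2*(n:ℝ)+2*(i:ℝ)+1) ((n:ℝ)+3, 2*(n:ℝ)+2*(i:ℝ)+2))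
    (m2 : z ∈ segment ℝ ((1:ℝ), 2*(n:ℝ)-3-2*(i':ℝ)) ((n:ℝ)+4+(i':ℝ), 2*(n:ℝ)-2-2*(i':ℝ)) ∪
      segment ℝ ((n:ℝ)+4+(i':ℝ), 2*(n:ℝ)-2-2*(i':ℝ)) ((n:ℝ)+4+(i':ℝ), 2*(n:ℝ)+2*(i':ℝ)+1) ∪
      segment ℝ ((n:ℝ)+4+(i':ℝ), 2*(n:ℝ)+2*(i':ℝ)+1) ((n:ℝ)+3, 2*(n:ℝ)+2*(i':ℝ)+2)) :
    False := by
  have hn : (0:ℝ) ≤ (n:ℝ) := Nat.cast_nonneg n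
  have hir : (0:ℝ) ≤ (i:ℝ) := Nat.cast_nonneg i
  have hc : (i:ℝ)+1 ≤ (i':ℝ) := by exact_mod_cast (by omega : i+1 ≤ i')
  have hx1 := hook3_le m1 1 0 ((n:ℝ)+4+(i:ℝ)) (by norm_num <;> linarith) (by norm_num)
    (by norm_num) (by norm_num <;> linarith)
  have hylow := hook3_ge m1 0 1 (2*(n:ℝ)-3-2*(i:ℝ)) (by norm_num) (by norm_num <;> linarith)
    (by norm_num <;> linarith) (by norm_num <;> linarith)
  have hyhigh := hook3_le m1 0 1 (2*(n:ℝ)+2*(i:ℝ)+2) (by norm_num <;> linarith)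
    (by norm_num <;> linarith) (by norm_num <;> linarith) (by norm_num)
  rcases m2 with (p|p)|p
  · have := seg_le p 0 1 (2*(n:ℝ)-2-2*(i':ℝ)) (by norm_num <;> linarith) (by norm_num)
    linarith
  · have := seg_ge p 1 0 ((n:ℝ)+4+(i':ℝ)) (by norm_num) (by norm_num)
    linarith
  · have := seg_ge p 0 1 (2*(n:ℝ)+2*(i':ℝ)+1) (by norm_num) (by norm_num <;> linarith)
    linarith

-- a→u hook vs u→b hook
lemma pair_GH {i j : ℕ} (hi : i + 1 < n) (hj : j < n)
    (m1 : z ∈ segment ℝ ((1:ℝ), 2*(n:ℝ)-3-2*(i:ℝ)) ((n:ℝ)+4+(i:ℝ), 2*(n:ℝ)-2-2*(i:ℝ)) ∪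
      segment ℝ ((n:ℝ)+4+(i:ℝ), 2*(n:ℝ)-2-2*(i:ℝ)) ((n:ℝ)+4+(i:ℝ), 2*(n:ℝ)+2*(i:ℝ)+1) ∪
      segment ℝ ((n:ℝ)+4+(i:ℝ), 2*(n:ℝ)+2*(i:ℝ)+1) ((n:ℝ)+3, 2*(n:ℝ)+2*(i:ℝ)+2))
    (m2 : z ∈ segment ℝ ((n:ℝ)+3, 2*(n:ℝ)+2*(j:ℝ)) (2+(j:ℝ), 2*(n:ℝ)+2*(j:ℝ)+1) ∪
      segment ℝ (2+(j:ℝ), 2*(n:ℝ)+2*(j:ℝ)+1) (2+(j:ℝ), 5*(n:ℝ)+2*(j:ℝ)-1) ∪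
      segment ℝ (2+(j:ℝ), 5*(n:ℝ)+2*(j:ℝ)-1) (-(3*(n:ℝ)+2+4*(j:ℝ)), 5*(n:ℝ)+2*(j:ℝ))) :
    z ∈ ({((1:ℝ), 2*(n:ℝ)-3-2*(i:ℝ)), ((n:ℝ)+3, 2*(n:ℝ)+2*(i:ℝ)+2)} ∩
      {((n:ℝ)+3, 2*(n:ℝ)+2*(j:ℝ)), (-(3*(n:ℝ)+2+4*(j:ℝ)), 5*(n:ℝ)+2*(j:ℝ))} :
        Set (ℝ × ℝ)) := by
  have hir : (0:ℝ) ≤ (i:ℝ) := Nat.cast_nonneg i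
  have hjr : (0:ℝ) ≤ (j:ℝ) := Nat.cast_nonneg j
  have hin : (i:ℝ)+2 ≤ (n:ℝ) := by exact_mod_cast (by omega : i+2 ≤ n)
  have hjn : (j:ℝ)+1 ≤ (n:ℝ) := by exact_mod_cast (by omega : j+1 ≤ n)
  have hHy := hook3_ge m2 0 1 (2*(n:ℝ)+2*(j:ℝ)) (by norm_num) (by norm_num <;> linarith)
    (by norm_num <;> linarith) (by norm_num <;> linarith)
  have hHx := hook3_le m2 1 0 ((n:ℝ)+3) (by norm_num) (by norm_num <;> linarith)
    (by norm_num <;> linarith) (by norm_num <;> linarith)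
  rcases m1 with (p|p)|p
  · exfalso
    have := seg_le p 0 1 (2*(n:ℝ)-2-2*(i:ℝ)) (by norm_num <;> linarith) (by norm_num)
    linarith
  · exfalso
    have := seg_ge p 1 0 ((n:ℝ)+4+(i:ℝ)) (by norm_num) (by norm_num)
    linarith
  · -- top piece of G
    have hT_ylow := seg_ge p 0 1 (2*(n:ℝ)+2*(i:ℝ)+1) (by norm_num) (by norm_num <;> linarith)
    have hT_yhigh := seg_le p 0 1 (2*(n:ℝ)+2*(i:ℝ)+2) (by norm_num <;> linarith) (by norm_num)
    have hT_xge := seg_ge p 1 0 ((n:ℝ)+3) (by norm_num <;> linarith) (by norm_num)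
    rcases m2 with (q|q)|q
    · -- L piece of H
      rcases Nat.lt_trichotomy j (i+1) with hlt | heq | hgt
      · -- j ≤ i
        rcases Nat.lt_or_ge j i with hji | hji
        · exfalso
          have := seg_le q 0 1 (2*(n:ℝ)+2*(j:ℝ)+1) (by norm_num) (by norm_num)
          have hc : (j:ℝ)+1 ≤ (i:ℝ) := by exact_mod_cast (by omega : j+1 ≤ i)
          linarith
        · have hji' : j = i := by omega
          subst hji'
          exfalso
          have hqy := seg_le q 0 1 (2*(n:ℝ)+2*(j:ℝ)+1) (by norm_num) (by norm_num)
          have hzC1 : (0:ℝ)*z.1 + (-1)*z.2 = -(2*(n:ℝ)+2*(j:ℝ)+1) := by linarith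
          have e1 := seg_eq_left p 0 (-1) (-(2*(n:ℝ)+2*(j:ℝ)+1)) (by norm_num)
            (by norm_num <;> linarith) hzC1
          have hzC2 : (0:ℝ)*z.1 + 1*z.2 = 2*(n:ℝ)+2*(j:ℝ)+1 := by linarith
          have e2 := seg_eq_right q 0 1 (2*(n:ℝ)+2*(j:ℝ)+1) (by norm_num <;> linarith)
            (by norm_num) hzC2
          rw [e1] at e2
          have := congrArg Prod.fst e2
          norm_num at this
          linarith
      · -- j = i+1 : shared vertex u_{i+1}
        have hj1 : (j:ℝ) = (i:ℝ)+1 := by exact_mod_cast (congrArg (Nat.cast (R := ℝ)) heq.symm).symm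
        have hzC1 : (0:ℝ)*z.1 + 1*z.2 = 2*(n:ℝ)+2*(i:ℝ)+2 := by
          have := seg_ge q 0 1 (2*(n:ℝ)+2*(j:ℝ)) (by norm_num) (by norm_num <;> linarith)
          norm_num at this ⊢
          linarith
        have e1 := seg_eq_right p 0 1 (2*(n:ℝ)+2*(i:ℝ)+2) (by norm_num <;> linarith)
          (by norm_num) hzC1
        have hzC2 : (0:ℝ)*z.1 + (-1)*z.2 = -(2*(n:ℝ)+2*(j:ℝ)) := by
          norm_num at hzC1 ⊢
          linarith
        have e2 := seg_eq_left q 0 (-1) (-(2*(n:ℝ)+2*(j:ℝ))) (by norm_num)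
          (by norm_num <;> linarith) hzC2
        simp only [Set.mem_inter_iff, Set.mem_insert_iff, Set.mem_singleton_iff]
        exact ⟨Or.inr e1, Or.inl e2⟩
      · exfalso
        have := seg_ge q 0 1 (2*(n:ℝ)+2*(j:ℝ)) (by norm_num) (by norm_num <;> linarith)
        have hc : (i:ℝ)+2 ≤ (j:ℝ) := by exact_mod_cast (by omega : i+2 ≤ j)
        linarith
    · -- W piece of H
      exfalso
      have := seg_le q 1 0 (2+(j:ℝ)) (by norm_num) (by norm_num)
      linarith
    · -- A piece of H
      exfalso
      have := seg_ge q 0 1 (5*(n:ℝ)+2*(j:ℝ)-1) (by norm_num) (by norm_num <;> linarith)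
      linarith

-- u→b hook vs u→b hook (j < j'): disjoint
lemma pair_HH {j j' : ℕ} (hlt : j < j') (hj' : j' < n)
    (m1 : z ∈ segment ℝ ((n:ℝ)+3, 2*(n:ℝ)+2*(j:ℝ)) (2+(j:ℝ), 2*(n:ℝ)+2*(j:ℝ)+1) ∪
      segment ℝ (2+(j:ℝ), 2*(n:ℝ)+2*(j:ℝ)+1) (2+(j:ℝ), 5*(n:ℝ)+2*(j:ℝ)-1) ∪
      segment ℝ (2+(j:ℝ), 5*(n:ℝ)+2*(j:ℝ)-1) (-(3*(n:ℝ)+2+4*(j:ℝ)), 5*(n:ℝ)+2*(j:ℝ)))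
    (m2 : z ∈ segment ℝ ((n:ℝ)+3, 2*(n:ℝ)+2*(j':ℝ)) (2+(j':ℝ), 2*(n:ℝ)+2*(j':ℝ)+1) ∪
      segment ℝ (2+(j':ℝ), 2*(n:ℝ)+2*(j':ℝ)+1) (2+(j':ℝ), 5*(n:ℝ)+2*(j':ℝ)-1) ∪
      segment ℝ (2+(j':ℝ), 5*(n:ℝ)+2*(j':ℝ)-1) (-(3*(n:ℝ)+2+4*(j':ℝ)), 5*(n:ℝ)+2*(j':ℝ))) :
    False := by
  have hjr : (0:ℝ) ≤ (j:ℝ) := Nat.cast_nonneg j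
  have hn2 : (2:ℝ) ≤ (n:ℝ) := by exact_mod_cast (by omega : 2 ≤ n)
  have hc : (j:ℝ)+1 ≤ (j':ℝ) := by exact_mod_cast (by omega : j+1 ≤ j')
  have hjn' : (j':ℝ)+1 ≤ (n:ℝ) := by exact_mod_cast (by omega : j'+1 ≤ n)
  rcases m2 with (q|q)|q
  · have hq_ylow := seg_ge q 0 1 (2*(n:ℝ)+2*(j':ℝ)) (by norm_num) (by norm_num <;> linarith)
    have hq_yhigh := seg_le q 0 1 (2*(n:ℝ)+2*(j':ℝ)+1) (by norm_num) (by norm_num)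
    have hq_xge := seg_ge q 1 0 (2+(j':ℝ)) (by norm_num <;> linarith) (by norm_num)
    rcases m1 with (p|p)|p
    · have := seg_le p 0 1 (2*(n:ℝ)+2*(j:ℝ)+1) (by norm_num) (by norm_num)
      linarith
    · have := seg_le p 1 0 (2+(j:ℝ)) (by norm_num) (by norm_num)
      linarith
    · have := seg_ge p 0 1 (5*(n:ℝ)+2*(j:ℝ)-1) (by norm_num) (by norm_num <;> linarith)
      linarith
  · have hq_ylow := seg_ge q 0 1 (2*(n:ℝ)+2*(j':ℝ)+1) (by norm_num) (by norm_num <;> linarith)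
    have hq_xge := seg_ge q 1 0 (2+(j':ℝ)) (by norm_num) (by norm_num)
    rcases m1 with (p|p)|p
    · have := seg_le p 0 1 (2*(n:ℝ)+2*(j:ℝ)+1) (by norm_num) (by norm_num)
      linarith
    · have := seg_le p 1 0 (2+(j:ℝ)) (by norm_num) (by norm_num)
      linarith
    · have := seg_le p 1 0 (2+(j:ℝ)) (by norm_num) (by norm_num <;> linarith)
      linarith
  · have hq_ylow := seg_ge q 0 1 (5*(n:ℝ)+2*(j':ℝ)-1) (by norm_num) (by norm_num <;> linarith)
    have hp_yhigh := hook3_le m1 0 1 (5*(n:ℝ)+2*(j:ℝ)) (by norm_num <;> linarith)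
      (by norm_num <;> linarith) (by norm_num <;> linarith) (by norm_num)
    linarith

-- fan vs u→b hook
lemma pair_FH {i j : ℕ} (hi1 : 1 ≤ i) (hj : j < n)
    (m1 : z ∈ segment ℝ ((1:ℝ), 2*(n:ℝ)-3-2*(i:ℝ)) ((0:ℝ), 2*(n:ℝ)-2*(i:ℝ)))
    (m2 : z ∈ segment ℝ ((n:ℝ)+3, 2*(n:ℝ)+2*(j:ℝ)) (2+(j:ℝ), 2*(n:ℝ)+2*(j:ℝ)+1) ∪
      segment ℝ (2+(j:ℝ), 2*(n:ℝ)+2*(j:ℝ)+1) (2+(j:ℝ), 5*(n:ℝ)+2*(j:ℝ)-1) ∪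
      segment ℝ (2+(j:ℝ), 5*(n:ℝ)+2*(j:ℝ)-1) (-(3*(n:ℝ)+2+4*(j:ℝ)), 5*(n:ℝ)+2*(j:ℝ))) :
    False := by
  have hn : (1:ℝ) ≤ (n:ℝ) := by exact_mod_cast (by omega : 1 ≤ n)
  have hjr : (0:ℝ) ≤ (j:ℝ) := Nat.cast_nonneg j
  have hi1' : (1:ℝ) ≤ (i:ℝ) := by exact_mod_cast hi1
  have b1 := seg_le m1 0 1 (2*(n:ℝ)-2*(i:ℝ)) (by norm_num) (by norm_num)
  have b2 := hook3_ge m2 0 1 (2*(n:ℝ)+2*(j:ℝ)) (by norm_num) (by norm_num <;> linarith)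
    (by norm_num <;> linarith) (by norm_num <;> linarith)
  linarith

end Pairs

section Battery

variable {n : ℕ}
open KV

lemma posA (i : Fin n) : pos (A i) = ((1:ℝ), 2*(n:ℝ)-3-2*((i:ℕ):ℝ)) := rfl
lemma posU' (t : Fin n) : pos (U t) = ((n:ℝ)+3, 2*(n:ℝ)+2*((t:ℕ):ℝ)) := rfl
lemma posV' (t : Fin n) : pos (V t) = ((0:ℝ), 2*((t:ℕ):ℝ)) := rfl
lemma posB' (j : Fin n) : pos (B j) = (-(3*(n:ℝ)+2+4*((j:ℕ):ℝ)), 5*(n:ℝ)+2*((j:ℕ):ℝ)) := rfl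

lemma posV_succ {s t : Fin n} (h : (t:ℕ) = (s:ℕ)+1) :
    pos (V t) = ((0:ℝ), 2*((s:ℕ):ℝ)+2) := by
  simp only [pos]
  rw [h]
  congr 1
  push_cast
  ring

lemma posU_succ {s t : Fin n} (h : (t:ℕ) = (s:ℕ)+1) :
    pos (U t) = ((n:ℝ)+3, 2*(n:ℝ)+2*((s:ℕ):ℝ)+2) := by
  simp only [pos]
  rw [h]
  congr 1
  push_cast
  ring

lemma posU_eq {u j : Fin n} (h : (u:ℕ) = (j:ℕ)) :
    pos (U u) = ((n:ℝ)+3, 2*(n:ℝ)+2*((j:ℕ):ℝ)) := by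
  simp only [pos]
  rw [h]

lemma posV_AV {i m : Fin n} (h : (m:ℕ) + (i:ℕ) = n) :
    pos (V m) = ((0:ℝ), 2*(n:ℝ)-2*((i:ℕ):ℝ)) := by
  simp only [pos]
  congr 1
  have := congrArg (Nat.cast (R := ℝ)) h
  push_cast at this
  linarith

lemma posV_VB {m j : Fin n} (h : (m:ℕ) + (j:ℕ) + 1 = n) :
    pos (V m) = ((0:ℝ), 2*(n:ℝ)-2-2*((j:ℕ):ℝ)) := by
  simp only [pos]
  congr 1
  have := congrArg (Nat.cast (R := ℝ)) h
  push_cast at this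
  linarith

/-- canonical memberships -/
lemma memR {s1 t1 : Fin n} (h : V s1 ⋖ V t1) (hts : (t1:ℕ) = (s1:ℕ)+1) (w : unitInterval) :
    (arc h) w ∈ segment ℝ ((0:ℝ), 2*((s1:ℕ):ℝ)) ((0:ℝ), 2*((s1:ℕ):ℝ)+2) := by
  have e : segment ℝ (pos (V s1)) (pos (V t1)) =
      segment ℝ ((0:ℝ), 2*((s1:ℕ):ℝ)) ((0:ℝ), 2*((s1:ℕ):ℝ)+2) := by
    rw [posV', posV_succ hts]
  exact e ▸ (segPath_mem (pos (V s1)) (pos (V t1)) w)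

lemma memS {s1 t1 : Fin n} (h : U s1 ⋖ U t1) (hts : (t1:ℕ) = (s1:ℕ)+1) (w : unitInterval) :
    (arc h) w ∈ segment ℝ ((n:ℝ)+3, 2*(n:ℝ)+2*((s1:ℕ):ℝ))
      ((n:ℝ)+3, 2*(n:ℝ)+2*((s1:ℕ):ℝ)+2) := by
  have e : segment ℝ (pos (U s1)) (pos (U t1)) =
      segment ℝ ((n:ℝ)+3, 2*(n:ℝ)+2*((s1:ℕ):ℝ)) ((n:ℝ)+3, 2*(n:ℝ)+2*((s1:ℕ):ℝ)+2) := by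
    rw [posU', posU_succ hts]
  exact e ▸ (segPath_mem (pos (U s1)) (pos (U t1)) w)

lemma memF {i m : Fin n} (h : A i ⋖ V m) (hmi : (m:ℕ) + (i:ℕ) = n) (w : unitInterval) :
    (arc h) w ∈ segment ℝ ((1:ℝ), 2*(n:ℝ)-3-2*((i:ℕ):ℝ)) ((0:ℝ), 2*(n:ℝ)-2*((i:ℕ):ℝ)) := by
  have e : segment ℝ (pos (A i)) (pos (V m)) =
      segment ℝ ((1:ℝ), 2*(n:ℝ)-3-2*((i:ℕ):ℝ)) ((0:ℝ), 2*(n:ℝ)-2*((i:ℕ):ℝ)) := by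
    rw [posA, posV_AV hmi]
  exact e ▸ (segPath_mem (pos (A i)) (pos (V m)) w)

lemma memE {m j : Fin n} (h : V m ⋖ B j) (hmj : (m:ℕ) + (j:ℕ) + 1 = n) (w : unitInterval) :
    (arc h) w ∈ segment ℝ ((0:ℝ), 2*(n:ℝ)-2-2*((j:ℕ):ℝ))
      (-(3*(n:ℝ)+2+4*((j:ℕ):ℝ)), 5*(n:ℝ)+2*((j:ℕ):ℝ)) := by
  have e : segment ℝ (pos (V m)) (pos (B j)) =
      segment ℝ ((0:ℝ), 2*(n:ℝ)-2-2*((j:ℕ):ℝ))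
        (-(3*(n:ℝ)+2+4*((j:ℕ):ℝ)), 5*(n:ℝ)+2*((j:ℕ):ℝ)) := by
    rw [posV_VB hmj, posB']
  exact e ▸ (segPath_mem (pos (V m)) (pos (B j)) w)

lemma memG {i t1 : Fin n} (h : A i ⋖ U t1) (hti : (t1:ℕ) = (i:ℕ)+1) (w : unitInterval) :
    (arc h) w ∈
      segment ℝ ((1:ℝ), 2*(n:ℝ)-3-2*((i:ℕ):ℝ)) ((n:ℝ)+4+((i:ℕ):ℝ), 2*(n:ℝ)-2-2*((i:ℕ):ℝ)) ∪
      segment ℝ ((n:ℝ)+4+((i:ℕ):ℝ), 2*(n:ℝ)-2-2*((i:ℕ):ℝ))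
        ((n:ℝ)+4+((i:ℕ):ℝ), 2*(n:ℝ)+2*((i:ℕ):ℝ)+1) ∪
      segment ℝ ((n:ℝ)+4+((i:ℕ):ℝ), 2*(n:ℝ)+2*((i:ℕ):ℝ)+1)
        ((n:ℝ)+3, 2*(n:ℝ)+2*((i:ℕ):ℝ)+2) := by
  have e : (segment ℝ (pos (A i)) ((n:ℝ)+4+((i:ℕ):ℝ), 2*(n:ℝ)-2-2*((i:ℕ):ℝ)) ∪
      segment ℝ ((n:ℝ)+4+((i:ℕ):ℝ), 2*(n:ℝ)-2-2*((i:ℕ):ℝ))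
        ((n:ℝ)+4+((i:ℕ):ℝ), 2*(n:ℝ)+2*((i:ℕ):ℝ)+1) ∪
      segment ℝ ((n:ℝ)+4+((i:ℕ):ℝ), 2*(n:ℝ)+2*((i:ℕ):ℝ)+1) (pos (U t1))) =
      (segment ℝ ((1:ℝ), 2*(n:ℝ)-3-2*((i:ℕ):ℝ)) ((n:ℝ)+4+((i:ℕ):ℝ), 2*(n:ℝ)-2-2*((i:ℕ):ℝ)) ∪
      segment ℝ ((n:ℝ)+4+((i:ℕ):ℝ), 2*(n:ℝ)-2-2*((i:ℕ):ℝ))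
        ((n:ℝ)+4+((i:ℕ):ℝ), 2*(n:ℝ)+2*((i:ℕ):ℝ)+1) ∪
      segment ℝ ((n:ℝ)+4+((i:ℕ):ℝ), 2*(n:ℝ)+2*((i:ℕ):ℝ)+1)
        ((n:ℝ)+3, 2*(n:ℝ)+2*((i:ℕ):ℝ)+2)) := by
    rw [posA, posU_succ hti]
  exact e ▸ (hookPath_mem (pos (A i)) ((n:ℝ)+4+((i:ℕ):ℝ), 2*(n:ℝ)-2-2*((i:ℕ):ℝ))
    ((n:ℝ)+4+((i:ℕ):ℝ), 2*(n:ℝ)+2*((i:ℕ):ℝ)+1) (pos (U t1)) w)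

lemma memH {u1 j : Fin n} (h : U u1 ⋖ B j) (huj : (u1:ℕ) = (j:ℕ)) (w : unitInterval) :
    (arc h) w ∈
      segment ℝ ((n:ℝ)+3, 2*(n:ℝ)+2*((j:ℕ):ℝ)) (2+((j:ℕ):ℝ), 2*(n:ℝ)+2*((j:ℕ):ℝ)+1) ∪
      segment ℝ (2+((j:ℕ):ℝ), 2*(n:ℝ)+2*((j:ℕ):ℝ)+1) (2+((j:ℕ):ℝ), 5*(n:ℝ)+2*((j:ℕ):ℝ)-1) ∪
      segment ℝ (2+((j:ℕ):ℝ), 5*(n:ℝ)+2*((j:ℕ):ℝ)-1)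
        (-(3*(n:ℝ)+2+4*((j:ℕ):ℝ)), 5*(n:ℝ)+2*((j:ℕ):ℝ)) := by
  have e : (segment ℝ (pos (U u1)) (2+((j:ℕ):ℝ), 2*(n:ℝ)+2*((j:ℕ):ℝ)+1) ∪
      segment ℝ (2+((j:ℕ):ℝ), 2*(n:ℝ)+2*((j:ℕ):ℝ)+1) (2+((j:ℕ):ℝ), 5*(n:ℝ)+2*((j:ℕ):ℝ)-1) ∪
      segment ℝ (2+((j:ℕ):ℝ), 5*(n:ℝ)+2*((j:ℕ):ℝ)-1) (pos (B j))) =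
      (segment ℝ ((n:ℝ)+3, 2*(n:ℝ)+2*((j:ℕ):ℝ)) (2+((j:ℕ):ℝ), 2*(n:ℝ)+2*((j:ℕ):ℝ)+1) ∪
      segment ℝ (2+((j:ℕ):ℝ), 2*(n:ℝ)+2*((j:ℕ):ℝ)+1) (2+((j:ℕ):ℝ), 5*(n:ℝ)+2*((j:ℕ):ℝ)-1) ∪
      segment ℝ (2+((j:ℕ):ℝ), 5*(n:ℝ)+2*((j:ℕ):ℝ)-1)
        (-(3*(n:ℝ)+2+4*((j:ℕ):ℝ)), 5*(n:ℝ)+2*((j:ℕ):ℝ))) := by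
    rw [posU_eq huj, posB']
  exact e ▸ (hookPath_mem (pos (U u1)) (2+((j:ℕ):ℝ), 2*(n:ℝ)+2*((j:ℕ):ℝ)+1)
    (2+((j:ℕ):ℝ), 5*(n:ℝ)+2*((j:ℕ):ℝ)-1) (pos (B j)) w)

lemma cover_shape {x y : KV n} (h : x ⋖ y) :
    (∃ i t : Fin n, x = A i ∧ y = U t ∧ (t:ℕ) = (i:ℕ)+1) ∨
    (∃ i m : Fin n, x = A i ∧ y = V m ∧ (m:ℕ) + (i:ℕ) = n) ∨
    (∃ s t : Fin n, x = U s ∧ y = U t ∧ (t:ℕ) = (s:ℕ)+1) ∨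
    (∃ s t : Fin n, x = V s ∧ y = V t ∧ (t:ℕ) = (s:ℕ)+1) ∨
    (∃ u j : Fin n, x = U u ∧ y = B j ∧ (u:ℕ) = (j:ℕ)) ∨
    (∃ m j : Fin n, x = V m ∧ y = B j ∧ (m:ℕ) + (j:ℕ) + 1 = n) := by
  rcases x with i|i|i|i <;> rcases y with j|j|j|j
  · exact (not_cov_AA h).elim
  · exact Or.inl ⟨i, j, rfl, rfl, cov_AU h⟩
  · exact Or.inr (Or.inl ⟨i, j, rfl, rfl, cov_AV h⟩)
  · exact (not_cov_AB h).elim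
  · exact (False.elim h.1.le)
  · exact Or.inr (Or.inr (Or.inl ⟨i, j, rfl, rfl, cov_UU h⟩))
  · exact (False.elim h.1.le)
  · exact Or.inr (Or.inr (Or.inr (Or.inr (Or.inl ⟨i, j, rfl, rfl, cov_UB h⟩))))
  · exact (False.elim h.1.le)
  · exact (False.elim h.1.le)
  · exact Or.inr (Or.inr (Or.inr (Or.inl ⟨i, j, rfl, rfl, cov_VV h⟩)))
  · exact Or.inr (Or.inr (Or.inr (Or.inr (Or.inr ⟨i, j, rfl, rfl, cov_VB h⟩))))
  · exact (False.elim h.1.le)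
  · exact (False.elim h.1.le)
  · exact (False.elim h.1.le)
  · exact (not_cov_BB h).elim

lemma arc_pairwise : ∀ ⦃x y x' y' : KV n⦄ (h : x ⋖ y) (h' : x' ⋖ y'),
    (x, y) ≠ (x', y') → ∀ s t : unitInterval, arc h s = arc h' t →
    arc h s ∈ ({pos x, pos y} ∩ {pos x', pos y'} : Set (ℝ × ℝ)) := by
  intro x y x' y' h h' hne s t heq
  rcases cover_shape h with ⟨i, t1, rfl, rfl, f1⟩ | ⟨i, mv, rfl, rfl, f1⟩ | ⟨s1, t1, rfl, rfl, f1⟩ | ⟨s1, t1, rfl, rfl, f1⟩ | ⟨u1, j1, rfl, rfl, f1⟩ | ⟨mv, j1, rfl, rfl, f1⟩ <;>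
    rcases cover_shape h' with ⟨i', t1', rfl, rfl, f2⟩ | ⟨i', mv', rfl, rfl, f2⟩ | ⟨s1', t1', rfl, rfl, f2⟩ | ⟨s1', t1', rfl, rfl, f2⟩ | ⟨u1', j1', rfl, rfl, f2⟩ | ⟨mv', j1', rfl, rfl, f2⟩
  · -- G vs G
    have z1 := memG h f1 s
    have z2 := heq.symm ▸ memG h' f2 t
    rcases Nat.lt_trichotomy (i:ℕ) (i':ℕ) with hlt | heqi | hgt
    · exact (pair_GG hlt z1 z2).elim
    · exact absurd (by rw [Fin.ext heqi, show t1 = t1' from Fin.ext (by omega)]) hne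
    · exact (pair_GG hgt z2 z1).elim
  · -- G vs F
    have z1 := memG h f1 s
    have z2 := heq.symm ▸ memF h' f2 t
    have eg : ({pos (A i), pos (U t1)} ∩ {pos (A i'), pos (V mv')} : Set (ℝ × ℝ)) =
        ({((1:ℝ), 2*(n:ℝ)-3-2*((i:ℕ):ℝ)), ((n:ℝ)+3, 2*(n:ℝ)+2*((i:ℕ):ℝ)+2)} ∩ {((1:ℝ), 2*(n:ℝ)-3-2*((i':ℕ):ℝ)), ((0:ℝ), 2*(n:ℝ)-2*((i':ℕ):ℝ))} : Set (ℝ × ℝ)) := by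
      rw [posA i, posU_succ f1, posA i', posV_AV f2]
    rw [eg]
    have r := pair_FG z2 z1
    exact ⟨r.2, r.1⟩
  · -- G vs S
    have z1 := memG h f1 s
    have z2 := heq.symm ▸ memS h' f2 t
    have eg : ({pos (A i), pos (U t1)} ∩ {pos (U s1'), pos (U t1')} : Set (ℝ × ℝ)) =
        ({((1:ℝ), 2*(n:ℝ)-3-2*((i:ℕ):ℝ)), ((n:ℝ)+3, 2*(n:ℝ)+2*((i:ℕ):ℝ)+2)} ∩ {((n:ℝ)+3, 2*(n:ℝ)+2*((s1':ℕ):ℝ)), ((n:ℝ)+3, 2*(n:ℝ)+2*((s1':ℕ):ℝ)+2)} : Set (ℝ × ℝ)) := by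
      rw [posA i, posU_succ f1, posU' s1', posU_succ f2]
    rw [eg]
    have r := pair_SG z2 z1
    exact ⟨r.2, r.1⟩
  · -- G vs R
    have z1 := memG h f1 s
    have z2 := heq.symm ▸ memR h' f2 t
    exact (pair_RG z2 z1).elim
  · -- G vs H
    have z1 := memG h f1 s
    have z2 := heq.symm ▸ memH h' f2 t
    have eg : ({pos (A i), pos (U t1)} ∩ {pos (U u1'), pos (B j1')} : Set (ℝ × ℝ)) =
        ({((1:ℝ), 2*(n:ℝ)-3-2*((i:ℕ):ℝ)), ((n:ℝ)+3, 2*(n:ℝ)+2*((i:ℕ):ℝ)+2)} ∩ {((n:ℝ)+3, 2*(n:ℝ)+2*((j1':ℕ):ℝ)), (-(3*(n:ℝ)+2+4*((j1':ℕ):ℝ)), 5*(n:ℝ)+2*((j1':ℕ):ℝ))} : Set (ℝ × ℝ)) := by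
      rw [posA i, posU_succ f1, posU_eq f2, posB' j1']
    rw [eg]
    exact pair_GH (by have := t1.isLt; omega) j1'.isLt z1 z2
  · -- G vs E
    have z1 := memG h f1 s
    have z2 := heq.symm ▸ memE h' f2 t
    exact (pair_EG z2 z1).elim
  · -- F vs G
    have z1 := memF h f1 s
    have z2 := heq.symm ▸ memG h' f2 t
    have eg : ({pos (A i), pos (V mv)} ∩ {pos (A i'), pos (U t1')} : Set (ℝ × ℝ)) =
        ({((1:ℝ), 2*(n:ℝ)-3-2*((i:ℕ):ℝ)), ((0:ℝ), 2*(n:ℝ)-2*((i:ℕ):ℝ))} ∩ {((1:ℝ), 2*(n:ℝ)-3-2*((i':ℕ):ℝ)), ((n:ℝ)+3, 2*(n:ℝ)+2*((i':ℕ):ℝ)+2)} : Set (ℝ × ℝ)) := by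
      rw [posA i, posV_AV f1, posA i', posU_succ f2]
    rw [eg]
    exact pair_FG z1 z2
  · -- F vs F
    have z1 := memF h f1 s
    have z2 := heq.symm ▸ memF h' f2 t
    have hii : (i:ℕ) ≠ (i':ℕ) := by
      intro hc
      exact hne (by rw [Fin.ext hc, show mv = mv' from Fin.ext (by omega)])
    exact (pair_FF hii z1 z2).elim
  · -- F vs S
    have z1 := memF h f1 s
    have z2 := heq.symm ▸ memS h' f2 t
    exact (pair_FS z1 z2).elim
  · -- F vs R
    have z1 := memF h f1 s
    have z2 := heq.symm ▸ memR h' f2 t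
    have eg : ({pos (A i), pos (V mv)} ∩ {pos (V s1'), pos (V t1')} : Set (ℝ × ℝ)) =
        ({((1:ℝ), 2*(n:ℝ)-3-2*((i:ℕ):ℝ)), ((0:ℝ), 2*(n:ℝ)-2*((i:ℕ):ℝ))} ∩ {((0:ℝ), 2*((s1':ℕ):ℝ)), ((0:ℝ), 2*((s1':ℕ):ℝ)+2)} : Set (ℝ × ℝ)) := by
      rw [posA i, posV_AV f1, posV' s1', posV_succ f2]
    rw [eg]
    have r := pair_RF i.isLt z2 z1
    exact ⟨r.2, r.1⟩
  · -- F vs H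
    have z1 := memF h f1 s
    have z2 := heq.symm ▸ memH h' f2 t
    exact (pair_FH (by have := mv.isLt; omega) j1'.isLt z1 z2).elim
  · -- F vs E
    have z1 := memF h f1 s
    have z2 := heq.symm ▸ memE h' f2 t
    have eg : ({pos (A i), pos (V mv)} ∩ {pos (V mv'), pos (B j1')} : Set (ℝ × ℝ)) =
        ({((1:ℝ), 2*(n:ℝ)-3-2*((i:ℕ):ℝ)), ((0:ℝ), 2*(n:ℝ)-2*((i:ℕ):ℝ))} ∩ {((0:ℝ), 2*(n:ℝ)-2-2*((j1':ℕ):ℝ)), (-(3*(n:ℝ)+2+4*((j1':ℕ):ℝ)), 5*(n:ℝ)+2*((j1':ℕ):ℝ))} : Set (ℝ × ℝ)) := by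
      rw [posA i, posV_AV f1, posV_VB f2, posB' j1']
    rw [eg]
    exact pair_FE z1 z2
  · -- S vs G
    have z1 := memS h f1 s
    have z2 := heq.symm ▸ memG h' f2 t
    have eg : ({pos (U s1), pos (U t1)} ∩ {pos (A i'), pos (U t1')} : Set (ℝ × ℝ)) =
        ({((n:ℝ)+3, 2*(n:ℝ)+2*((s1:ℕ):ℝ)), ((n:ℝ)+3, 2*(n:ℝ)+2*((s1:ℕ):ℝ)+2)} ∩ {((1:ℝ), 2*(n:ℝ)-3-2*((i':ℕ):ℝ)), ((n:ℝ)+3, 2*(n:ℝ)+2*((i':ℕ):ℝ)+2)} : Set (ℝ × ℝ)) := by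
      rw [posU' s1, posU_succ f1, posA i', posU_succ f2]
    rw [eg]
    exact pair_SG z1 z2
  · -- S vs F
    have z1 := memS h f1 s
    have z2 := heq.symm ▸ memF h' f2 t
    exact (pair_FS z2 z1).elim
  · -- S vs S
    have z1 := memS h f1 s
    have z2 := heq.symm ▸ memS h' f2 t
    have hss : (s1:ℕ) ≠ (s1':ℕ) := by
      intro hc
      exact hne (by rw [Fin.ext hc, show t1 = t1' from Fin.ext (by omega)])
    have eg : ({pos (U s1), pos (U t1)} ∩ {pos (U s1'), pos (U t1')} : Set (ℝ × ℝ)) =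
        ({((n:ℝ)+3, 2*(n:ℝ)+2*((s1:ℕ):ℝ)), ((n:ℝ)+3, 2*(n:ℝ)+2*((s1:ℕ):ℝ)+2)} ∩ {((n:ℝ)+3, 2*(n:ℝ)+2*((s1':ℕ):ℝ)), ((n:ℝ)+3, 2*(n:ℝ)+2*((s1':ℕ):ℝ)+2)} : Set (ℝ × ℝ)) := by
      rw [posU' s1, posU_succ f1, posU' s1', posU_succ f2]
    rw [eg]
    exact pair_SS hss z1 z2
  · -- S vs R
    have z1 := memS h f1 s
    have z2 := heq.symm ▸ memR h' f2 t
    exact (pair_RS z2 z1).elim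
  · -- S vs H
    have z1 := memS h f1 s
    have z2 := heq.symm ▸ memH h' f2 t
    have eg : ({pos (U s1), pos (U t1)} ∩ {pos (U u1'), pos (B j1')} : Set (ℝ × ℝ)) =
        ({((n:ℝ)+3, 2*(n:ℝ)+2*((s1:ℕ):ℝ)), ((n:ℝ)+3, 2*(n:ℝ)+2*((s1:ℕ):ℝ)+2)} ∩ {((n:ℝ)+3, 2*(n:ℝ)+2*((j1':ℕ):ℝ)), (-(3*(n:ℝ)+2+4*((j1':ℕ):ℝ)), 5*(n:ℝ)+2*((j1':ℕ):ℝ))} : Set (ℝ × ℝ)) := by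
      rw [posU' s1, posU_succ f1, posU_eq f2, posB' j1']
    rw [eg]
    exact pair_SH j1'.isLt z1 z2
  · -- S vs E
    have z1 := memS h f1 s
    have z2 := heq.symm ▸ memE h' f2 t
    exact (pair_ES z2 z1).elim
  · -- R vs G
    have z1 := memR h f1 s
    have z2 := heq.symm ▸ memG h' f2 t
    exact (pair_RG z1 z2).elim
  · -- R vs F
    have z1 := memR h f1 s
    have z2 := heq.symm ▸ memF h' f2 t
    have eg : ({pos (V s1), pos (V t1)} ∩ {pos (A i'), pos (V mv')} : Set (ℝ × ℝ)) =
        ({((0:ℝ), 2*((s1:ℕ):ℝ)), ((0:ℝ), 2*((s1:ℕ):ℝ)+2)} ∩ {((1:ℝ), 2*(n:ℝ)-3-2*((i':ℕ):ℝ)), ((0:ℝ), 2*(n:ℝ)-2*((i':ℕ):ℝ))} : Set (ℝ × ℝ)) := by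
      rw [posV' s1, posV_succ f1, posA i', posV_AV f2]
    rw [eg]
    exact pair_RF i'.isLt z1 z2
  · -- R vs S
    have z1 := memR h f1 s
    have z2 := heq.symm ▸ memS h' f2 t
    exact (pair_RS z1 z2).elim
  · -- R vs R
    have z1 := memR h f1 s
    have z2 := heq.symm ▸ memR h' f2 t
    have hss : (s1:ℕ) ≠ (s1':ℕ) := by
      intro hc
      exact hne (by rw [Fin.ext hc, show t1 = t1' from Fin.ext (by omega)])
    have eg : ({pos (V s1), pos (V t1)} ∩ {pos (V s1'), pos (V t1')} : Set (ℝ × ℝ)) =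
        ({((0:ℝ), 2*((s1:ℕ):ℝ)), ((0:ℝ), 2*((s1:ℕ):ℝ)+2)} ∩ {((0:ℝ), 2*((s1':ℕ):ℝ)), ((0:ℝ), 2*((s1':ℕ):ℝ)+2)} : Set (ℝ × ℝ)) := by
      rw [posV' s1, posV_succ f1, posV' s1', posV_succ f2]
    rw [eg]
    exact pair_RR hss z1 z2
  · -- R vs H
    have z1 := memR h f1 s
    have z2 := heq.symm ▸ memH h' f2 t
    exact (pair_RH (by have := t1.isLt; omega) j1'.isLt z1 z2).elim
  · -- R vs E
    have z1 := memR h f1 s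
    have z2 := heq.symm ▸ memE h' f2 t
    have eg : ({pos (V s1), pos (V t1)} ∩ {pos (V mv'), pos (B j1')} : Set (ℝ × ℝ)) =
        ({((0:ℝ), 2*((s1:ℕ):ℝ)), ((0:ℝ), 2*((s1:ℕ):ℝ)+2)} ∩ {((0:ℝ), 2*(n:ℝ)-2-2*((j1':ℕ):ℝ)), (-(3*(n:ℝ)+2+4*((j1':ℕ):ℝ)), 5*(n:ℝ)+2*((j1':ℕ):ℝ))} : Set (ℝ × ℝ)) := by
      rw [posV' s1, posV_succ f1, posV_VB f2, posB' j1']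
    rw [eg]
    exact pair_RE j1'.isLt z1 z2
  · -- H vs G
    have z1 := memH h f1 s
    have z2 := heq.symm ▸ memG h' f2 t
    have eg : ({pos (U u1), pos (B j1)} ∩ {pos (A i'), pos (U t1')} : Set (ℝ × ℝ)) =
        ({((n:ℝ)+3, 2*(n:ℝ)+2*((j1:ℕ):ℝ)), (-(3*(n:ℝ)+2+4*((j1:ℕ):ℝ)), 5*(n:ℝ)+2*((j1:ℕ):ℝ))} ∩ {((1:ℝ), 2*(n:ℝ)-3-2*((i':ℕ):ℝ)), ((n:ℝ)+3, 2*(n:ℝ)+2*((i':ℕ):ℝ)+2)} : Set (ℝ × ℝ)) := by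
      rw [posU_eq f1, posB' j1, posA i', posU_succ f2]
    rw [eg]
    have r := pair_GH (by have := t1'.isLt; omega) j1.isLt z2 z1
    exact ⟨r.2, r.1⟩
  · -- H vs F
    have z1 := memH h f1 s
    have z2 := heq.symm ▸ memF h' f2 t
    exact (pair_FH (by have := mv'.isLt; omega) j1.isLt z2 z1).elim
  · -- H vs S
    have z1 := memH h f1 s
    have z2 := heq.symm ▸ memS h' f2 t
    have eg : ({pos (U u1), pos (B j1)} ∩ {pos (U s1'), pos (U t1')} : Set (ℝ × ℝ)) =
        ({((n:ℝ)+3, 2*(n:ℝ)+2*((j1:ℕ):ℝ)), (-(3*(n:ℝ)+2+4*((j1:ℕ):ℝ)), 5*(n:ℝ)+2*((j1:ℕ):ℝ))} ∩ {((n:ℝ)+3, 2*(n:ℝ)+2*((s1':ℕ):ℝ)), ((n:ℝ)+3, 2*(n:ℝ)+2*((s1':ℕ):ℝ)+2)} : Set (ℝ × ℝ)) := by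
      rw [posU_eq f1, posB' j1, posU' s1', posU_succ f2]
    rw [eg]
    have r := pair_SH j1.isLt z2 z1
    exact ⟨r.2, r.1⟩
  · -- H vs R
    have z1 := memH h f1 s
    have z2 := heq.symm ▸ memR h' f2 t
    exact (pair_RH (by have := t1'.isLt; omega) j1.isLt z2 z1).elim
  · -- H vs H
    have z1 := memH h f1 s
    have z2 := heq.symm ▸ memH h' f2 t
    rcases Nat.lt_trichotomy (j1:ℕ) (j1':ℕ) with hlt | heqi | hgt
    · exact (pair_HH hlt j1'.isLt z1 z2).elim
    · exact absurd (by rw [show u1 = u1' from Fin.ext (by omega), Fin.ext heqi]) hne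
    · exact (pair_HH hgt j1.isLt z2 z1).elim
  · -- H vs E
    have z1 := memH h f1 s
    have z2 := heq.symm ▸ memE h' f2 t
    have eg : ({pos (U u1), pos (B j1)} ∩ {pos (V mv'), pos (B j1')} : Set (ℝ × ℝ)) =
        ({((n:ℝ)+3, 2*(n:ℝ)+2*((j1:ℕ):ℝ)), (-(3*(n:ℝ)+2+4*((j1:ℕ):ℝ)), 5*(n:ℝ)+2*((j1:ℕ):ℝ))} ∩ {((0:ℝ), 2*(n:ℝ)-2-2*((j1':ℕ):ℝ)), (-(3*(n:ℝ)+2+4*((j1':ℕ):ℝ)), 5*(n:ℝ)+2*((j1':ℕ):ℝ))} : Set (ℝ × ℝ)) := by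
      rw [posU_eq f1, posB' j1, posV_VB f2, posB' j1']
    rw [eg]
    have r := pair_EH j1'.isLt j1.isLt z2 z1
    exact ⟨r.2, r.1⟩
  · -- E vs G
    have z1 := memE h f1 s
    have z2 := heq.symm ▸ memG h' f2 t
    exact (pair_EG z1 z2).elim
  · -- E vs F
    have z1 := memE h f1 s
    have z2 := heq.symm ▸ memF h' f2 t
    have eg : ({pos (V mv), pos (B j1)} ∩ {pos (A i'), pos (V mv')} : Set (ℝ × ℝ)) =
        ({((0:ℝ), 2*(n:ℝ)-2-2*((j1:ℕ):ℝ)), (-(3*(n:ℝ)+2+4*((j1:ℕ):ℝ)), 5*(n:ℝ)+2*((j1:ℕ):ℝ))} ∩ {((1:ℝ), 2*(n:ℝ)-3-2*((i':ℕ):ℝ)), ((0:ℝ), 2*(n:ℝ)-2*((i':ℕ):ℝ))} : Set (ℝ × ℝ)) := by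
      rw [posV_VB f1, posB' j1, posA i', posV_AV f2]
    rw [eg]
    have r := pair_FE z2 z1
    exact ⟨r.2, r.1⟩
  · -- E vs S
    have z1 := memE h f1 s
    have z2 := heq.symm ▸ memS h' f2 t
    exact (pair_ES z1 z2).elim
  · -- E vs R
    have z1 := memE h f1 s
    have z2 := heq.symm ▸ memR h' f2 t
    have eg : ({pos (V mv), pos (B j1)} ∩ {pos (V s1'), pos (V t1')} : Set (ℝ × ℝ)) =
        ({((0:ℝ), 2*(n:ℝ)-2-2*((j1:ℕ):ℝ)), (-(3*(n:ℝ)+2+4*((j1:ℕ):ℝ)), 5*(n:ℝ)+2*((j1:ℕ):ℝ))} ∩ {((0:ℝ), 2*((s1':ℕ):ℝ)), ((0:ℝ), 2*((s1':ℕ):ℝ)+2)} : Set (ℝ × ℝ)) := by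
      rw [posV_VB f1, posB' j1, posV' s1', posV_succ f2]
    rw [eg]
    have r := pair_RE j1.isLt z2 z1
    exact ⟨r.2, r.1⟩
  · -- E vs H
    have z1 := memE h f1 s
    have z2 := heq.symm ▸ memH h' f2 t
    have eg : ({pos (V mv), pos (B j1)} ∩ {pos (U u1'), pos (B j1')} : Set (ℝ × ℝ)) =
        ({((0:ℝ), 2*(n:ℝ)-2-2*((j1:ℕ):ℝ)), (-(3*(n:ℝ)+2+4*((j1:ℕ):ℝ)), 5*(n:ℝ)+2*((j1:ℕ):ℝ))} ∩ {((n:ℝ)+3, 2*(n:ℝ)+2*((j1':ℕ):ℝ)), (-(3*(n:ℝ)+2+4*((j1':ℕ):ℝ)), 5*(n:ℝ)+2*((j1':ℕ):ℝ))} : Set (ℝ × ℝ)) := by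
      rw [posV_VB f1, posB' j1, posU_eq f2, posB' j1']
    rw [eg]
    exact pair_EH j1.isLt j1'.isLt z1 z2
  · -- E vs E
    have z1 := memE h f1 s
    have z2 := heq.symm ▸ memE h' f2 t
    have hjj : (j1:ℕ) ≠ (j1':ℕ) := by
      intro hc
      exact hne (by rw [show mv = mv' from Fin.ext (by omega), Fin.ext hc])
    exact (pair_EE hjj z1 z2).elim

end Battery


theorem kv_planar (n : ℕ) : IsPlanarPoset (KV n) :=
  ⟨pos, pos_inj, arc, arc_inj, arc_strict, arc_pairwise⟩

end Stmt15

open Stmt15 in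
/-- If the class of finite planar posets has the Ramsey property for
comparabilities, then the Boolean dimension of planar posets is unbounded: for every
`k` there is a finite planar poset with no Boolean realizer of size at most `k`. -/
theorem stmt_15
    (hRamsey : ∀ (α : Type) (_ : Fintype α) (pα : PartialOrder α),
      @IsPlanarPoset α pα → ∀ r : ℕ, 0 < r →
        ∃ (β : Type) (_ : Fintype β) (pβ : PartialOrder β),
          @IsPlanarPoset β pβ ∧
          ∀ c : β → β → Fin r,
            ∃ f : α → β,
              (∀ x y : α, pα.le x y ↔ pβ.le (f x) (f y)) ∧
              ∃ k : Fin r, ∀ x y : α, pα.lt x y → c (f x) (f y) = k) :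
    ∀ k : ℕ, ∃ (α : Type) (_ : Fintype α) (pα : PartialOrder α),
      @IsPlanarPoset α pα ∧
      ∀ d : ℕ, d ≤ k → ∀ (L : Fin d → α → α → Prop) (S : Set (Fin d → Prop)),
        ¬ @IsBooleanRealizer α pα d L S := by
  intro k
  classical
  set n := k + 1 with hn
  obtain ⟨β, instβ, pβ, hβpl, hRam⟩ :=
    hRamsey (KV n) inferInstance inferInstance (kv_planar n) (2 ^ k) (by positivity)
  refine ⟨β, instβ, pβ, hβpl, ?_⟩
  intro d hdk L S hreal
  obtain ⟨hlin, hiffS⟩ := hreal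
  have ecard : Fintype.card (Fin (2 ^ k)) = Fintype.card (Fin k → Bool) := by simp
  let e : (Fin k → Bool) ≃ Fin (2 ^ k) := (Fintype.equivOfCardEq ecard).symm
  let sig : β → β → (Fin k → Bool) := fun a b i =>
    if h : (i : ℕ) < d then (if L ⟨i, h⟩ a b then true else false) else false
  obtain ⟨f, hord, k0, hmono⟩ := hRam (fun a b => e (sig a b))
  -- f is injective on distinct elements
  have hfne : ∀ {x y : KV n}, x ≠ y → f x ≠ f y := by
    intro x y hxy heq
    exact hxy (le_antisymm ((hord x y).2 (heq ▸ le_refl (f x)))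
      ((hord y x).2 (heq ▸ le_refl (f x))))
  have hflt : ∀ {x y : KV n}, x < y → f x < f y := by
    intro x y hxy
    exact lt_of_le_of_ne ((hord x y).1 hxy.le) (hfne hxy.ne)
  set σ : Fin k → Bool := e.symm k0 with hσ
  have hsig : ∀ {x y : KV n}, x < y → sig (f x) (f y) = σ := by
    intro x y hxy
    have h1 : e (sig (f x) (f y)) = k0 := hmono x y hxy
    rw [hσ, ← h1, Equiv.symm_apply_apply]
  -- a base comparable pair
  have hn0 : 0 < n := Nat.succ_pos k
  set x0 : KV n := KV.U ⟨0, hn0⟩ with hx0def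
  set y0 : KV n := KV.B ⟨0, hn0⟩ with hy0def
  have hx0y0 : x0 < y0 := by
    refine lt_of_le_of_ne ?_ (by simp [hx0def, hy0def])
    show KV.kle x0 y0
    simp [hx0def, hy0def, KV.kle]
  -- characterization of L components via σ
  have hcomp : ∀ {x y : KV n}, x < y → ∀ (m : Fin d),
      (L m (f x) (f y) ↔ σ ⟨m, lt_of_lt_of_le m.isLt hdk⟩ = true) := by
    intro x y hxy m
    have h1 := congrFun (hsig hxy) ⟨m, lt_of_lt_of_le m.isLt hdk⟩
    simp only [sig] at h1
    rw [dif_pos m.isLt] at h1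
    constructor
    · intro hL
      rw [← h1]
      simp only [Fin.eta] at *
      simp [hL]
    · intro hb
      by_contra hL
      rw [← h1] at hb
      simp only [Fin.eta] at *
      simp [hL] at hb
  -- the derived Dushnik-Miller realizer
  let M : Fin d → KV n → KV n → Prop := fun m x y =>
    if σ ⟨m, lt_of_lt_of_le m.isLt hdk⟩ = true then L m (f x) (f y) else L m (f y) (f x)
  have hrefl : ∀ (m : Fin d) (a : β), L m a a := fun m a => (hlin m).1.1.1.refl a
  have hLtrans : ∀ (m : Fin d) (a b c : β), L m a b → L m b c → L m a c :=
    fun m a b c h1 h2 => (hlin m).1.1.2.trans a b c h1 h2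
  have hLanti : ∀ (m : Fin d) (a b : β), L m a b → L m b a → a = b :=
    fun m a b h1 h2 => (hlin m).1.2.antisymm a b h1 h2
  have hLtot : ∀ (m : Fin d) (a b : β), L m a b ∨ L m b a :=
    fun m a b => (hlin m).2.total a b
  have hMiff : ∀ x y : KV n, x ≤ y ↔ ∀ m, M m x y := by
    intro x y
    constructor
    · intro hle m
      rcases eq_or_ne x y with rfl | hne
      · by_cases hb : σ ⟨m, lt_of_lt_of_le m.isLt hdk⟩ = true
        · simp only [M, if_pos hb]; exact hrefl m _
        · simp only [M, if_neg hb]; exact hrefl m _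
      · have hlt : x < y := lt_of_le_of_ne hle hne
        by_cases hb : σ ⟨m, lt_of_lt_of_le m.isLt hdk⟩ = true
        · simp only [M, if_pos hb]; exact (hcomp hlt m).2 hb
        · simp only [M, if_neg hb]
          rcases hLtot m (f y) (f x) with h | h
          · exact h
          · exact absurd ((hcomp hlt m).1 h) hb
    · intro hM
      rcases eq_or_ne x y with rfl | hne
      · exact le_refl x
      · -- show the signature of (f x, f y) equals that of (f x0, f y0)
        have hvec : (fun m => L m (f x) (f y)) = (fun m => L m (f x0) (f y0)) := by
          funext m
          have hM' := hM m
          simp only [M] at hM'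
          have h0 := hcomp hx0y0 m
          apply propext
          constructor
          · intro hL
            apply h0.2
            by_contra hb
            rw [if_neg hb] at hM'
            exact hfne hne (hLanti m _ _ hL hM')
          · intro hL0
            have hb := h0.1 hL0
            rwa [if_pos hb] at hM'
        have hS0 : (fun m => L m (f x0) (f y0)) ∈ S :=
          (hiffS _ _ (hfne hx0y0.ne)).1 (hflt hx0y0)
        have : f x < f y := (hiffS _ _ (hfne hne)).2 (by rw [hvec]; exact hS0)
        exact (hord x y).2 this.le
  refine KV.no_realizer (n := n) (d := d) (by omega) M ?_ ?_ hMiff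
  · intro m x y hne hM
    by_cases hb : σ ⟨m, lt_of_lt_of_le m.isLt hdk⟩ = true
    · simp only [M, if_pos hb] at *
      rcases hLtot m (f y) (f x) with h | h
      · exact h
      · exact absurd h hM
    · simp only [M, if_neg hb] at *
      rcases hLtot m (f x) (f y) with h | h
      · exact h
      · exact absurd h hM
  · intro m x y z h1 h2
    by_cases hb : σ ⟨m, lt_of_lt_of_le m.isLt hdk⟩ = true
    · simp only [M, if_pos hb] at *
      exact hLtrans m _ _ _ h1 h2
    · simp only [M, if_neg hb] at *
      exact hLtrans m _ _ _ h2 h1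
end
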